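/- arXiv:2103.10152 — 4 statements merged into one kernel-verified Lean document; each statement's English description precedes it below -/
import Mathlib

section
/- Suppose (Poly-R₁) holds. Then for any T>0 there exist constants δ∈(0,1) (independent of T) and ε=ε(T)∈(0,1) such that P( ε/φ^{−1}(1/t) ≤ S_t ≤ 1/φ^{−1}(1/t) ) ≥ δ for all t∈(0,T). Moreover, if (Poly-∞) holds, then there exist ε,δ∈(0,1) such that this bound holds for all t>0. -/
open MeasureTheory Real Set
open scoped ENNReal

/-- Tail of the Lévy measure: `w(r) = ν((r,∞))`. -/
noncomputable def levyTail (ν : Measure ℝ) (r : ℝ) : ℝ := (ν (Set.Ioi r)).toReal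

/-- Laplace exponent `φ(λ) = ∫ (1 - e^{-λ s}) ν(ds)`. -/
noncomputable def laplaceExp (ν : Measure ℝ) (lam : ℝ) : ℝ :=
  ∫ s, (1 - Real.exp (-(lam * s))) ∂ν

/-- Condition (Poly-R₁); (Poly-∞) is the case `R₁ = ⊤`. -/
def PolyCond (ν : Measure ℝ) (R₁ : ℝ≥0∞) (c c' β₁ β₂ : ℝ) : Prop :=
  ∀ r R : ℝ, 0 < r → r ≤ R → ENNReal.ofReal R < R₁ →
    c * (R / r) ^ β₁ ≤ levyTail ν r / levyTail ν R ∧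
      levyTail ν r / levyTail ν R ≤ c' * (R / r) ^ β₂

/-- `ν` is the Lévy measure of a driftless subordinator. -/
structure IsLevyMeasure (ν : Measure ℝ) : Prop where
  supp : ν (Set.Iic 0) = 0
  tail_fin : ∀ r : ℝ, 0 < r → ν (Set.Ioi r) < ⊤
  integ : IntegrableOn (fun s => s) (Set.Ioc (0:ℝ) 1) ν

/-- `μ t` is the law of `S_t` for the driftless subordinator with Lévy measure `ν`. -/
structure IsSubordinatorLaw (ν : Measure ℝ) (μ : ℝ → Measure ℝ) : Prop where
  levy : IsLevyMeasure ν
  prob : ∀ t : ℝ, 0 < t → IsProbabilityMeasure (μ t)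
  nonneg : ∀ t : ℝ, 0 < t → μ t (Set.Iio 0) = 0
  laplace : ∀ t lam : ℝ, 0 < t → 0 ≤ lam →
    (∫ s, Real.exp (-(lam * s)) ∂(μ t)) = Real.exp (-(t * laplaceExp ν lam))

/-- `H(λ) = φ(λ) - λ φ'(λ)`. -/
noncomputable def Hfun (ν : Measure ℝ) (lam : ℝ) : ℝ :=
  laplaceExp ν lam - lam * deriv (laplaceExp ν) lam

/-- `σ(t,s) = (φ')⁻¹(s/t)` if `s/t < φ'(0+)`, and `σ(t,s) = 0` otherwise. -/
def IsSigmaFun (ν : Measure ℝ) (σ : ℝ → ℝ → ℝ) : Prop :=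
  ∀ t s : ℝ, 0 < t → 0 < s →
    ((∃ lam : ℝ, 0 < lam ∧ s / t < deriv (laplaceExp ν) lam) →
      0 < σ t s ∧ deriv (laplaceExp ν) (σ t s) = s / t) ∧
    ((∀ lam : ℝ, 0 < lam → deriv (laplaceExp ν) lam ≤ s / t) → σ t s = 0)

/-- `φInv` is the inverse of the Laplace exponent `φ` on `(0,∞)`. -/
def IsPhiInv (ν : Measure ℝ) (φInv : ℝ → ℝ) : Prop :=
  ∀ u : ℝ, 0 < u → 0 < φInv u ∧ laplaceExp ν (φInv u) = u

/-- `HInv` is the inverse of `H` on `(0,∞)`. -/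
def IsHInv (ν : Measure ℝ) (HInv : ℝ → ℝ) : Prop :=
  ∀ u : ℝ, 0 < u → 0 < HInv u ∧ Hfun ν (HInv u) = u

/-!
Tilt the law of `S_t` by `e^{-Λ s}`, where `Λ ≥ λ₀ := φ⁻¹(1/t)` is chosen with `t H(Λ) = 8`
(`H = φ - λ φ'`; such `Λ` exists because the tail `w` is unbounded near `0`). Under the tilted
law, `S_t` has mean `x = t φ'(Λ)` and variance `-t φ''(Λ) ≤ 2 t H(Λ) / Λ² = 16 / Λ²`, so by
Chebyshev it lies in `[x - 8/Λ, x + 8/Λ]` with tilted probability `≥ 3/4`; undoing the tilt there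
costs at most `e^{-16}`. Since `Λ (x + 8/Λ) = t φ(Λ)` and `φ(λ)/λ` decreases, this window ends
before `1/λ₀`. Its part below `1/(K λ₀)` has probability `≤ e^{1 - t φ(K λ₀)}` (Chernoff), which is
negligible once `t φ(K λ₀) ≥ 19`. The lower scaling of `w` gives `φ(K λ₀) ≳ K^{β₁} φ(λ₀)` as long
as `1/λ₀ < R₁`, and for `t < T` outside this range monotonicity of `φ` suffices.
-/

lemma mul_one_sub_exp_neg_le {θ : ℝ} (b : ℝ) (hθ₀ : 0 ≤ θ) (hθ₁ : θ ≤ 1) :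
    θ * (1 - exp (-b)) ≤ 1 - exp (-(θ * b)) := by
  have h := convexOn_exp.2 (Set.mem_univ (-b)) (Set.mem_univ 0) hθ₀ (by linarith : 0 ≤ 1 - θ)
    (by ring)
  simp only [smul_eq_mul, mul_zero, add_zero, exp_zero, mul_one] at h
  rw [mul_neg] at h
  linarith

lemma one_sub_exp_neg_nonneg {x : ℝ} (hx : 0 ≤ x) : 0 ≤ 1 - exp (-x) := by
  linarith [exp_le_one_iff.2 (neg_nonpos.2 hx)]

lemma one_sub_exp_neg_le_min (x : ℝ) : 1 - exp (-x) ≤ min 1 x :=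
  le_min (by linarith [exp_pos (-x)]) (by linarith [one_sub_le_exp_neg x])

lemma min_le_two_mul_one_sub_exp_neg {x : ℝ} (hx : 0 ≤ x) : min 1 x ≤ 2 * (1 - exp (-x)) := by
  have h₁ : 1 / 2 ≤ 1 - exp (-1) := by linarith [exp_neg_one_lt_half]
  rcases le_total x 1 with h | h
  · have := mul_one_sub_exp_neg_le 1 hx h
    rw [mul_one] at this
    rw [min_eq_right h]; nlinarith
  · have : exp (-x) ≤ exp (-1) := exp_le_exp.2 (by linarith)
    rw [min_eq_left h]; linarith

lemma pow_mul_exp_neg_le {s l : ℝ} (hs : 0 ≤ s) (hl : 0 < l) (k : ℕ) :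
    s ^ k * exp (-(l * s)) ≤ k.factorial / l ^ k := by
  have h := pow_div_factorial_le_exp (l * s) (by positivity) k
  rw [div_le_iff₀ (by positivity)] at h
  rw [le_div_iff₀ (by positivity), exp_neg]
  calc s ^ k * (exp (l * s))⁻¹ * l ^ k = (l * s) ^ k * (exp (l * s))⁻¹ := by ring
    _ ≤ exp (l * s) * k.factorial * (exp (l * s))⁻¹ := by gcongr
    _ = k.factorial := by field_simp

noncomputable def hfunKernel (x : ℝ) : ℝ := 1 - exp (-x) - x * exp (-x)

lemma hasDerivAt_hfunKernel (x : ℝ) : HasDerivAt hfunKernel (x * exp (-x)) x := by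
  have he : HasDerivAt (fun y => exp (-y)) (-exp (-x)) x := by
    simpa using (hasDerivAt_neg x).exp
  exact (((hasDerivAt_const x 1).sub he).sub ((hasDerivAt_id' x).mul he)).congr_deriv (by ring)

lemma hfunKernel_mono {x y : ℝ} (hx : 0 ≤ x) (hxy : x ≤ y) : hfunKernel x ≤ hfunKernel y :=
  monotoneOn_of_hasDerivWithinAt_nonneg (convex_Ici 0)
    (fun z _ => (hasDerivAt_hfunKernel z).continuousAt.continuousWithinAt)
    (fun z _ => (hasDerivAt_hfunKernel z).hasDerivWithinAt)
    (fun z hz => by rw [interior_Ici] at hz; exact mul_nonneg hz.out.le (exp_pos _).le)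
    hx (le_trans hx hxy : 0 ≤ y) hxy

lemma sq_mul_exp_neg_le_two_mul_hfunKernel {x : ℝ} (hx : 0 ≤ x) :
    x ^ 2 * exp (-x) ≤ 2 * hfunKernel x := by
  have hd : ∀ y,
      HasDerivAt (fun y => 2 * hfunKernel y - y ^ 2 * exp (-y)) (y ^ 2 * exp (-y)) y := by
    intro y
    have he : HasDerivAt (fun y => exp (-y)) (-exp (-y)) y := by
      simpa using (hasDerivAt_neg y).exp
    exact (((hasDerivAt_hfunKernel y).const_mul 2).sub ((hasDerivAt_pow 2 y).mul he)).congr_deriv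
      (by push_cast; ring)
  have := monotoneOn_of_hasDerivWithinAt_nonneg (convex_Ici 0)
    (fun z _ => (hd z).continuousAt.continuousWithinAt) (fun z _ => (hd z).hasDerivWithinAt)
    (fun z _ => by positivity) self_mem_Ici (hx : x ∈ Ici 0) hx
  simpa [hfunKernel] using this

lemma hfunKernel_nonneg {x : ℝ} (hx : 0 ≤ x) : 0 ≤ hfunKernel x := by
  nlinarith [sq_mul_exp_neg_le_two_mul_hfunKernel hx, exp_pos (-x), sq_nonneg x]

lemma quarter_le_hfunKernel_one : 1 / 4 ≤ hfunKernel 1 := by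
  have : exp (-1) ≤ 3 / 8 := by
    rw [exp_neg, inv_le_comm₀ (exp_pos 1) (by norm_num)]
    linarith [exp_one_gt_d9]
  simp only [hfunKernel]; linarith

lemma hasDerivAt_integral_add_mul_exp {m : Measure ℝ} (hm : ∀ᵐ s ∂m, 0 ≤ s) {a f : ℝ → ℝ}
    (hF : ∀ x, 0 < x → Integrable (fun s => a s + f s * exp (-(x * s))) m)
    (hF' : ∀ x, 0 < x → Integrable (fun s => s * f s * exp (-(x * s))) m) {l : ℝ} (hl : 0 < l) :
    HasDerivAt (fun x => ∫ s, (a s + f s * exp (-(x * s))) ∂m)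
      (-∫ s, s * f s * exp (-(l * s)) ∂m) l := by
  have key := hasDerivAt_integral_of_dominated_loc_of_deriv_le (μ := m)
    (F := fun x s => a s + f s * exp (-(x * s))) (F' := fun x s => -(s * f s * exp (-(x * s))))
    (bound := fun s => ‖s * f s * exp (-(l / 2 * s))‖) (Metric.ball_mem_nhds l (half_pos hl))
    (Filter.eventually_of_mem (Ioi_mem_nhds hl) fun x hx => (hF x hx).aestronglyMeasurable)
    (hF l hl) (hF' l hl).aestronglyMeasurable.neg ?_ (hF' _ (half_pos hl)).norm ?_
  · rw [← integral_neg]; exact key.2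
  · filter_upwards [hm] with s hs x hx
    have hx' : l / 2 ≤ x := by
      rw [Metric.mem_ball, Real.dist_eq, abs_lt] at hx; linarith
    simp only [norm_neg, norm_mul, Real.norm_eq_abs, abs_exp]
    gcongr
  · filter_upwards with s x _
    exact ((((hasDerivAt_id' x).mul_const s).fun_neg.exp.const_mul (f s)).const_add
      (a s)).congr_deriv (by ring)

noncomputable def expMoment (m : Measure ℝ) (k : ℕ) (l : ℝ) : ℝ :=
  ∫ s, s ^ k * exp (-(l * s)) ∂m

lemma hasDerivAt_expMoment {m : Measure ℝ} (hm : ∀ᵐ s ∂m, 0 ≤ s) {k : ℕ}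
    (hk : ∀ x, 0 < x → Integrable (fun s => s ^ k * exp (-(x * s))) m)
    (hk' : ∀ x, 0 < x → Integrable (fun s => s ^ (k + 1) * exp (-(x * s))) m)
    {l : ℝ} (hl : 0 < l) : HasDerivAt (expMoment m k) (-expMoment m (k + 1) l) l := by
  have h := hasDerivAt_integral_add_mul_exp hm (a := 0) (f := fun s => s ^ k)
    (by simpa using hk) (by simpa [← pow_succ'] using hk') hl
  simp only [Pi.zero_apply, zero_add, ← pow_succ'] at h
  exact h

lemma expMoment_nonneg {m : Measure ℝ} (hm : ∀ᵐ s ∂m, 0 ≤ s) (k : ℕ) (l : ℝ) :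
    0 ≤ expMoment m k l :=
  integral_nonneg_of_ae (hm.mono fun s hs => by positivity)

lemma levyTail_anti {ν : Measure ℝ} {r₁ r₂ : ℝ} (hfin : ν (Ioi r₁) ≠ ⊤) (h : r₁ ≤ r₂) :
    levyTail ν r₂ ≤ levyTail ν r₁ :=
  ENNReal.toReal_mono hfin (measure_mono (Ioi_subset_Ioi h))

lemma lintegral_ofReal_min_one_mul_eq {m : Measure ℝ} (hm : ∀ᵐ s ∂m, 0 ≤ s) {l : ℝ} (hl : 0 < l) :
    ∫⁻ s, ENNReal.ofReal (min 1 (l * s)) ∂m = ∫⁻ u in Ioo 0 1, m (Ioi (u / l)) := by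
  rw [lintegral_eq_lintegral_meas_lt m (hm.mono fun s hs => le_min zero_le_one (by positivity))
    (by fun_prop), ← Ioo_union_Ici_eq_Ioi zero_lt_one,
    lintegral_union measurableSet_Ici (Set.disjoint_left.2 fun _ hu hv => hv.out.not_gt hu.2)]
  have hzero : ∫⁻ u in Ici 1, m {s | u < min 1 (l * s)} = 0 := by
    refine (setLIntegral_congr_fun measurableSet_Ici fun u hu => ?_).trans lintegral_zero
    convert measure_empty (μ := m)
    exact eq_empty_of_forall_notMem fun s hs => (min_le_left _ _).not_gt (hu.out.trans_lt hs)
  rw [hzero, add_zero]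
  refine setLIntegral_congr_fun measurableSet_Ioo fun u hu => ?_
  congr 1 with s
  simp [div_lt_iff₀ hl, hu.2, mul_comm]

namespace IsLevyMeasure

variable {ν : Measure ℝ} (hν : IsLevyMeasure ν)
include hν

lemma ae_pos : ∀ᵐ s ∂ν, 0 < s :=
  ae_iff.2 (measure_mono_null (fun _ hs => not_lt.1 hs) hν.supp)

lemma integrable_of_abs_le {f : ℝ → ℝ} (hf : AEStronglyMeasurable f ν) {C₁ C₂ : ℝ}
    (h₁ : ∀ s ∈ Ioc 0 1, |f s| ≤ C₁ * s) (h₂ : ∀ s, 1 < s → |f s| ≤ C₂) : Integrable f ν := by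
  rw [← Measure.restrict_eq_self_of_ae_mem (s := Ioi 0) hν.ae_pos,
    ← Ioc_union_Ioi_eq_Ioi zero_le_one]
  refine IntegrableOn.union ?_ ?_
  · refine Integrable.mono' (hν.integ.const_mul C₁) hf.restrict ?_
    exact (ae_restrict_iff' measurableSet_Ioc).2 (.of_forall h₁)
  · refine Integrable.mono' (integrableOn_const (C := C₂) (hν.tail_fin 1 one_pos).ne) hf.restrict ?_
    exact (ae_restrict_iff' measurableSet_Ioi).2 (.of_forall h₂)

lemma integrable_one_sub_exp {l : ℝ} (hl : 0 < l) :
    Integrable (fun s => 1 - exp (-(l * s))) ν := by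
  refine hν.integrable_of_abs_le (by fun_prop) (C₁ := l) (C₂ := 1) ?_ ?_
  · intro s hs
    rw [abs_of_nonneg (one_sub_exp_neg_nonneg (by nlinarith [hs.1]))]
    exact (one_sub_exp_neg_le_min _).trans (min_le_right _ _)
  · intro s hs
    rw [abs_of_nonneg (one_sub_exp_neg_nonneg (by nlinarith))]
    exact (one_sub_exp_neg_le_min _).trans (min_le_left _ _)

lemma integrable_pow_mul_exp {k : ℕ} (hk : k ≠ 0) {l : ℝ} (hl : 0 < l) :
    Integrable (fun s => s ^ k * exp (-(l * s))) ν := by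
  refine hν.integrable_of_abs_le (by fun_prop) (C₁ := 1) (C₂ := k.factorial / l ^ k) ?_ ?_
  · intro s hs
    have : exp (-(l * s)) ≤ 1 := exp_le_one_iff.2 (by nlinarith [hs.1])
    rw [abs_of_nonneg (by have := hs.1.le; positivity), one_mul]
    calc s ^ k * exp (-(l * s)) ≤ s * 1 := by
          gcongr
          exacts [hs.1.le, pow_le_of_le_one hs.1.le hs.2 hk]
      _ = s := mul_one s
  · intro s hs
    rw [abs_of_nonneg (by positivity)]
    exact pow_mul_exp_neg_le (by linarith) hl k

lemma hasDerivAt_laplaceExp {l : ℝ} (hl : 0 < l) :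
    HasDerivAt (laplaceExp ν) (expMoment ν 1 l) l := by
  have h := hasDerivAt_integral_add_mul_exp (hν.ae_pos.mono fun _ hs => hs.le)
    (a := fun _ => 1) (f := fun _ => -1)
    (by simpa [← sub_eq_add_neg] using fun x hx => hν.integrable_one_sub_exp hx)
    (by simpa using fun x hx => (hν.integrable_pow_mul_exp one_ne_zero hx).neg) hl
  simp only [neg_mul, one_mul, ← sub_eq_add_neg, mul_neg_one, integral_neg, neg_neg] at h
  rw [expMoment]
  simp only [pow_one]
  exact h

lemma hasDerivAt_expMoment {k : ℕ} (hk : k ≠ 0) {l : ℝ} (hl : 0 < l) :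
    HasDerivAt (expMoment ν k) (-expMoment ν (k + 1) l) l :=
  _root_.hasDerivAt_expMoment (hν.ae_pos.mono fun _ hs => hs.le)
    (fun _ hx => hν.integrable_pow_mul_exp hk hx)
    (fun _ hx => hν.integrable_pow_mul_exp (Nat.succ_ne_zero k) hx) hl

lemma laplaceExp_mono {l₁ l₂ : ℝ} (h₁ : 0 < l₁) (h : l₁ ≤ l₂) :
    laplaceExp ν l₁ ≤ laplaceExp ν l₂ := by
  refine integral_mono_ae (hν.integrable_one_sub_exp h₁)
    (hν.integrable_one_sub_exp (h₁.trans_le h)) ?_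
  filter_upwards [hν.ae_pos] with s hs
  have : exp (-(l₂ * s)) ≤ exp (-(l₁ * s)) := exp_le_exp.2 (by nlinarith)
  linarith

lemma mul_laplaceExp_le {l₁ l₂ : ℝ} (h₁ : 0 < l₁) (h : l₁ ≤ l₂) :
    l₁ * laplaceExp ν l₂ ≤ l₂ * laplaceExp ν l₁ := by
  have h₂ : 0 < l₂ := h₁.trans_le h
  rw [laplaceExp, laplaceExp, ← integral_const_mul, ← integral_const_mul]
  refine integral_mono_ae ((hν.integrable_one_sub_exp h₂).const_mul l₁)
    ((hν.integrable_one_sub_exp h₁).const_mul l₂) ?_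
  filter_upwards with s
  have key := mul_one_sub_exp_neg_le (l₂ * s) (div_nonneg h₁.le h₂.le) ((div_le_one h₂).2 h)
  rw [show l₁ / l₂ * (l₂ * s) = l₁ * s by field_simp] at key
  calc l₁ * (1 - exp (-(l₂ * s))) = l₂ * (l₁ / l₂ * (1 - exp (-(l₂ * s)))) := by field_simp
    _ ≤ l₂ * (1 - exp (-(l₁ * s))) := by gcongr

lemma hasDerivAt_exp_neg_mul_laplaceExp (t : ℝ) {l : ℝ} (hl : 0 < l) :
    HasDerivAt (fun x => exp (-(t * laplaceExp ν x)))
      (-(t * expMoment ν 1 l * exp (-(t * laplaceExp ν l)))) l :=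
  (((hν.hasDerivAt_laplaceExp hl).const_mul t).fun_neg.exp).congr_deriv (by ring)

lemma Hfun_eq {l : ℝ} (hl : 0 < l) : Hfun ν l = laplaceExp ν l - l * expMoment ν 1 l := by
  rw [Hfun, (hν.hasDerivAt_laplaceExp hl).deriv]

lemma Hfun_eq_integral {l : ℝ} (hl : 0 < l) : Hfun ν l = ∫ s, hfunKernel (l * s) ∂ν := by
  rw [hν.Hfun_eq hl, laplaceExp, expMoment, ← integral_const_mul,
    ← integral_sub (hν.integrable_one_sub_exp hl)
      ((hν.integrable_pow_mul_exp one_ne_zero hl).const_mul l)]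
  simp only [hfunKernel, pow_one]
  congr 1 with s
  ring

lemma integrable_hfunKernel_mul {l : ℝ} (hl : 0 < l) :
    Integrable (fun s => hfunKernel (l * s)) ν := by
  refine ((hν.integrable_one_sub_exp hl).sub
    ((hν.integrable_pow_mul_exp one_ne_zero hl).const_mul l)).congr (.of_forall fun s => ?_)
  simp only [Pi.sub_apply, hfunKernel, pow_one]; ring

lemma Hfun_le_laplaceExp {l : ℝ} (hl : 0 < l) : Hfun ν l ≤ laplaceExp ν l := by
  have := mul_nonneg hl.le (expMoment_nonneg (hν.ae_pos.mono fun _ hs => hs.le) 1 l)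
  rw [hν.Hfun_eq hl]; linarith

lemma levyTail_inv_div_four_le_Hfun {l : ℝ} (hl : 0 < l) :
    levyTail ν l⁻¹ / 4 ≤ Hfun ν l := by
  have hint := hν.integrable_hfunKernel_mul hl
  have hkernel : ∀ s ∈ Ioi l⁻¹, 1 / 4 ≤ hfunKernel (l * s) := fun s hs =>
    quarter_le_hfunKernel_one.trans
      (hfunKernel_mono zero_le_one (by rw [← mul_inv_cancel₀ hl.ne']; gcongr; exact hs.out.le))
  calc levyTail ν l⁻¹ / 4 = ∫ _ in Ioi l⁻¹, (1 / 4 : ℝ) ∂ν := by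
        rw [setIntegral_const, smul_eq_mul, levyTail, measureReal_def]; ring
    _ ≤ ∫ s in Ioi l⁻¹, hfunKernel (l * s) ∂ν :=
        setIntegral_mono_on (integrableOn_const (hν.tail_fin _ (inv_pos.2 hl)).ne)
          hint.integrableOn measurableSet_Ioi hkernel
    _ ≤ Hfun ν l := by
        rw [hν.Hfun_eq_integral hl]
        exact setIntegral_le_integral hint
          (hν.ae_pos.mono fun s hs => hfunKernel_nonneg (by positivity))

lemma sq_mul_expMoment_two_le {l : ℝ} (hl : 0 < l) :
    l ^ 2 * expMoment ν 2 l ≤ 2 * Hfun ν l := by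
  rw [hν.Hfun_eq_integral hl, expMoment, ← integral_const_mul, ← integral_const_mul]
  refine integral_mono_ae ((hν.integrable_pow_mul_exp two_ne_zero hl).const_mul _)
    ((hν.integrable_hfunKernel_mul hl).const_mul _) ?_
  filter_upwards [hν.ae_pos] with s hs
  have := sq_mul_exp_neg_le_two_mul_hfunKernel (mul_pos hl hs).le
  rwa [mul_pow, mul_assoc] at this

lemma continuousOn_Hfun : ContinuousOn (Hfun ν) (Ioi 0) := by
  refine ContinuousOn.congr (f := fun l => laplaceExp ν l - l * expMoment ν 1 l) ?_
    fun l hl => hν.Hfun_eq hl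
  intro l hl
  exact ((hν.hasDerivAt_laplaceExp hl).continuousAt.sub (continuousAt_id.mul
    (hν.hasDerivAt_expMoment one_ne_zero hl).continuousAt)).continuousWithinAt

lemma exists_le_and_mul_Hfun_eq (htail : ∀ A, ∃ r, 0 < r ∧ A ≤ levyTail ν r)
    {t lam₀ a : ℝ} (ht : 0 < t) (hlam₀ : 0 < lam₀) (hφ : t * laplaceExp ν lam₀ = 1)
    (ha : 1 ≤ a) : ∃ Λ, lam₀ ≤ Λ ∧ t * Hfun ν Λ = a := by
  obtain ⟨r, hr, hrA⟩ := htail (4 * a / t)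
  set M := max lam₀ r⁻¹
  have hM : 0 < M := hlam₀.trans_le (le_max_left _ _)
  have hlo : t * Hfun ν lam₀ ≤ a := by
    nlinarith [hν.Hfun_le_laplaceExp hlam₀]
  have hhi : a ≤ t * Hfun ν M := by
    have h₁ : levyTail ν r ≤ levyTail ν M⁻¹ :=
      levyTail_anti (hν.tail_fin _ (inv_pos.2 hM)).ne ((inv_le_comm₀ hM hr).2 (le_max_right _ _))
    have h₂ := hν.levyTail_inv_div_four_le_Hfun hM
    rw [div_le_iff₀ ht] at hrA
    nlinarith
  obtain ⟨Λ, hΛ, hΛa⟩ := intermediate_value_Icc (le_max_left lam₀ r⁻¹)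
    ((hν.continuousOn_Hfun.mono fun l hl => hlam₀.trans_le hl.1).const_smul t) ⟨hlo, hhi⟩
  exact ⟨Λ, hΛ.1, hΛa⟩

lemma ofReal_laplaceExp_eq_lintegral {l : ℝ} (hl : 0 < l) :
    ENNReal.ofReal (laplaceExp ν l) = ∫⁻ s, ENNReal.ofReal (1 - exp (-(l * s))) ∂ν :=
  ofReal_integral_eq_lintegral_ofReal (hν.integrable_one_sub_exp hl)
    (hν.ae_pos.mono fun s hs => one_sub_exp_neg_nonneg (by positivity))

lemma ofReal_laplaceExp_le_lintegral {l : ℝ} (hl : 0 < l) :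
    ENNReal.ofReal (laplaceExp ν l) ≤ ∫⁻ s, ENNReal.ofReal (min 1 (l * s)) ∂ν := by
  rw [hν.ofReal_laplaceExp_eq_lintegral hl]
  exact lintegral_mono fun s => ENNReal.ofReal_le_ofReal (one_sub_exp_neg_le_min _)

lemma lintegral_le_ofReal_two_mul_laplaceExp {l : ℝ} (hl : 0 < l) :
    ∫⁻ s, ENNReal.ofReal (min 1 (l * s)) ∂ν ≤ ENNReal.ofReal (2 * laplaceExp ν l) := by
  rw [ENNReal.ofReal_mul zero_le_two, hν.ofReal_laplaceExp_eq_lintegral hl,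
    ← lintegral_const_mul' _ _ ENNReal.ofReal_ne_top]
  refine lintegral_mono_ae (hν.ae_pos.mono fun s hs => ?_)
  rw [← ENNReal.ofReal_mul zero_le_two]
  exact ENNReal.ofReal_le_ofReal (min_le_two_mul_one_sub_exp_neg (by positivity))

lemma ofReal_levyTail {r : ℝ} (hr : 0 < r) : ENNReal.ofReal (levyTail ν r) = ν (Ioi r) :=
  ENNReal.ofReal_toReal (hν.tail_fin r hr).ne

lemma mul_expMoment_one_add_div_le {t lam₀ Λ a : ℝ} (ht : 0 ≤ t) (hlam₀ : 0 < lam₀)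
    (hΛ : lam₀ ≤ Λ) (hφ : t * laplaceExp ν lam₀ = 1) (hH : t * Hfun ν Λ = a) :
    t * expMoment ν 1 Λ + a / Λ ≤ lam₀⁻¹ := by
  have hΛ₀ : 0 < Λ := hlam₀.trans_le hΛ
  have hconc := mul_le_mul_of_nonneg_left (hν.mul_laplaceExp_le hlam₀ hΛ) ht
  have hsum : t * expMoment ν 1 Λ + a / Λ = t * laplaceExp ν Λ / Λ := by
    rw [← hH, hν.Hfun_eq hΛ₀]; field_simp; ring
  rw [hsum, div_le_iff₀ hΛ₀, inv_mul_eq_div, le_div_iff₀ hlam₀]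
  linear_combination hconc + Λ * hφ

end IsLevyMeasure

namespace IsPhiInv

variable {ν : Measure ℝ} {φInv : ℝ → ℝ} (hφInv : IsPhiInv ν φInv)
include hφInv

lemma mul_laplaceExp_inv_eq_one {t : ℝ} (ht : 0 < t) : t * laplaceExp ν (φInv t⁻¹) = 1 := by
  rw [(hφInv _ (inv_pos.2 ht)).2, mul_inv_cancel₀ ht.ne']

lemma monotoneOn (hν : IsLevyMeasure ν) : MonotoneOn φInv (Ioi 0) := by
  intro u hu v _ huv
  by_contra! h
  have := hν.laplaceExp_mono (hφInv v (hu.trans_le huv)).1 h.le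
  rw [(hφInv u hu).2, (hφInv v (hu.trans_le huv)).2] at this
  rw [le_antisymm huv this] at h
  exact h.false

/-- Outside the scaling window, `t` is bounded below, so for bounded `t` the lower bound
on `t φ(K φ⁻¹(1/t))` follows from monotonicity alone. -/
lemma eventually_le_mul_laplaceExp_of_le_ofReal (hν : IsLevyMeasure ν) {R₁ : ℝ≥0∞}
    (hR₁ : 0 < R₁) {A : ℝ} (hA : 0 ≤ A) {T : ℝ} (hT : 0 < T) :
    ∀ᶠ K in Filter.atTop, ∀ t, 0 < t → t < T → R₁ ≤ ENNReal.ofReal (φInv t⁻¹)⁻¹ →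
      A ≤ t * laplaceExp ν (K * φInv t⁻¹) := by
  set z := R₁.toReal⁻¹
  have hT' := (hφInv T⁻¹ (inv_pos.2 hT)).1
  have hu : 0 < max (A * laplaceExp ν z) 1 := lt_max_of_lt_right one_pos
  filter_upwards [Filter.eventually_ge_atTop (φInv (max (A * laplaceExp ν z) 1) / φInv T⁻¹)]
    with K hK t ht htT hout
  obtain ⟨hlam₀, hφ⟩ := hφInv t⁻¹ (inv_pos.2 ht)
  have hR₁top : R₁ ≠ ⊤ := ne_top_of_le_ne_top ENNReal.ofReal_ne_top hout
  have hz : φInv t⁻¹ ≤ z := by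
    have := ENNReal.toReal_mono ENNReal.ofReal_ne_top hout
    rw [ENNReal.toReal_ofReal (inv_pos.2 hlam₀).le] at this
    exact (le_inv_comm₀ hlam₀ (ENNReal.toReal_pos hR₁.ne' hR₁top)).2 this
  have htz : 1 ≤ t * laplaceExp ν z := by
    have := hν.laplaceExp_mono hlam₀ hz
    rw [hφ, inv_le_iff_one_le_mul₀ ht] at this
    linarith
  have hK' : φInv (max (A * laplaceExp ν z) 1) ≤ K * φInv t⁻¹ := by
    have hK₀ : 0 ≤ K := (div_nonneg (hφInv _ hu).1.le hT'.le).trans hK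
    rw [div_le_iff₀ hT'] at hK
    exact hK.trans (mul_le_mul_of_nonneg_left
      (hφInv.monotoneOn hν (inv_pos.2 hT) (inv_pos.2 ht) (inv_anti₀ ht htT.le)) hK₀)
  have hφK := hν.laplaceExp_mono (hφInv _ hu).1 hK'
  rw [(hφInv _ hu).2] at hφK
  nlinarith [le_max_left (A * laplaceExp ν z) 1]

end IsPhiInv

namespace PolyCond

variable {ν : Measure ℝ} {R₁ : ℝ≥0∞} {c c' β₁ β₂ : ℝ} (hpoly : PolyCond ν R₁ c c' β₁ β₂)
include hpoly

lemma levyTail_pos (hc : 0 < c) {R : ℝ} (hR : 0 < R) (hR₁ : ENNReal.ofReal R < R₁) :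
    0 < levyTail ν R := by
  refine ENNReal.toReal_nonneg.lt_of_ne fun h => ?_
  have := (hpoly R R hR le_rfl hR₁).1
  rw [levyTail, ← h, div_zero] at this
  simp only [div_self hR.ne', one_rpow, mul_one] at this
  linarith

lemma mul_rpow_mul_levyTail_le (hc : 0 < c) {r R : ℝ} (hr : 0 < r) (hrR : r ≤ R)
    (hR₁ : ENNReal.ofReal R < R₁) : c * (R / r) ^ β₁ * levyTail ν R ≤ levyTail ν r :=
  (le_div_iff₀ (hpoly.levyTail_pos hc (hr.trans_le hrR) hR₁)).1 (hpoly r R hr hrR hR₁).1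

lemma exists_le_levyTail (hc : 0 < c) (hβ₁ : 0 < β₁) (hR₁ : 0 < R₁) (A : ℝ) :
    ∃ r, 0 < r ∧ A ≤ levyTail ν r := by
  obtain ⟨R, -, hR, hRR₁⟩ := ENNReal.lt_iff_exists_real_btwn.1 hR₁
  have hR : 0 < R := ENNReal.ofReal_pos.1 hR
  have hw := hpoly.levyTail_pos hc hR hRR₁
  obtain ⟨K, hKA, hK⟩ := (((tendsto_rpow_atTop hβ₁).const_mul_atTop hc).atTop_mul_const hw
    |>.eventually_ge_atTop A |>.and (Filter.eventually_ge_atTop 1)).exists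
  have hK₀ : 0 < K := zero_lt_one.trans_le hK
  refine ⟨R / K, div_pos hR hK₀, hKA.trans ?_⟩
  have := hpoly.mul_rpow_mul_levyTail_le hc (div_pos hR hK₀) (div_le_self hR.le hK) hRR₁
  rwa [div_div_cancel₀ hR.ne'] at this

/-- The lower scaling of the tail transfers to `φ` through
`∫ min 1 (λ s) ν(ds) = ∫₀¹ w(u/λ) du`, which is comparable to `φ(λ)`. -/
lemma mul_rpow_mul_laplaceExp_le (hν : IsLevyMeasure ν) (hc : 0 < c) {lam₀ K : ℝ}
    (hlam₀ : 0 < lam₀) (hwin : ENNReal.ofReal lam₀⁻¹ < R₁) (hK : 1 ≤ K) :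
    c * K ^ β₁ * laplaceExp ν lam₀ ≤ 2 * laplaceExp ν (K * lam₀) := by
  have hK₀ : 0 < K := zero_lt_one.trans_le hK
  have hKl : 0 < K * lam₀ := mul_pos hK₀ hlam₀
  have hcK : 0 ≤ c * K ^ β₁ := by positivity
  have hν' : ∀ᵐ s ∂ν, 0 ≤ s := hν.ae_pos.mono fun _ hs => hs.le
  have hscale : ENNReal.ofReal (c * K ^ β₁) * ∫⁻ u in Ioo 0 1, ν (Ioi (u / lam₀))
      ≤ ∫⁻ u in Ioo 0 1, ν (Ioi (u / (K * lam₀))) := by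
    rw [← lintegral_const_mul' _ _ ENNReal.ofReal_ne_top]
    refine setLIntegral_mono' measurableSet_Ioo fun u hu => ?_
    have hr : 0 < u / (K * lam₀) := div_pos hu.1 hKl
    have hR : 0 < u / lam₀ := div_pos hu.1 hlam₀
    have hwin' : ENNReal.ofReal (u / lam₀) < R₁ :=
      (ENNReal.ofReal_le_ofReal (div_le_div_of_nonneg_right hu.2.le hlam₀.le)).trans_lt
        (by rwa [one_div])
    have := hpoly.mul_rpow_mul_levyTail_le hc hr
      (div_le_div_of_nonneg_left hu.1.le hlam₀ (le_mul_of_one_le_left hlam₀.le hK)) hwin'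
    rw [show u / lam₀ / (u / (K * lam₀)) = K by field_simp [hu.1.ne']] at this
    rw [← hν.ofReal_levyTail hr, ← hν.ofReal_levyTail hR, ← ENNReal.ofReal_mul hcK]
    exact ENNReal.ofReal_le_ofReal this
  have key : ENNReal.ofReal (c * K ^ β₁ * laplaceExp ν lam₀)
      ≤ ENNReal.ofReal (2 * laplaceExp ν (K * lam₀)) :=
    calc ENNReal.ofReal (c * K ^ β₁ * laplaceExp ν lam₀)
        = ENNReal.ofReal (c * K ^ β₁) * ENNReal.ofReal (laplaceExp ν lam₀) :=
          ENNReal.ofReal_mul hcK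
      _ ≤ ENNReal.ofReal (c * K ^ β₁) * ∫⁻ u in Ioo 0 1, ν (Ioi (u / lam₀)) := by
          rw [← lintegral_ofReal_min_one_mul_eq hν' hlam₀]
          gcongr
          exact hν.ofReal_laplaceExp_le_lintegral hlam₀
      _ ≤ ∫⁻ u in Ioo 0 1, ν (Ioi (u / (K * lam₀))) := hscale
      _ ≤ ENNReal.ofReal (2 * laplaceExp ν (K * lam₀)) := by
          rw [← lintegral_ofReal_min_one_mul_eq hν' hKl]
          exact hν.lintegral_le_ofReal_two_mul_laplaceExp hKl
  have hφ : 0 ≤ laplaceExp ν (K * lam₀) :=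
    integral_nonneg_of_ae (hν.ae_pos.mono fun s hs => one_sub_exp_neg_nonneg (by positivity))
  exact (ENNReal.ofReal_le_ofReal_iff (by positivity)).1 key

lemma eventually_le_mul_laplaceExp (hν : IsLevyMeasure ν) (hc : 0 < c) (hβ₁ : 0 < β₁)
    {φInv : ℝ → ℝ} (hφInv : IsPhiInv ν φInv) (A : ℝ) :
    ∀ᶠ K in Filter.atTop, ∀ t, 0 < t → ENNReal.ofReal (φInv t⁻¹)⁻¹ < R₁ →
      A ≤ t * laplaceExp ν (K * φInv t⁻¹) := by
  filter_upwards [((tendsto_rpow_atTop hβ₁).const_mul_atTop hc).eventually_ge_atTop (2 * A),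
    Filter.eventually_ge_atTop 1] with K hKA hK t ht hwin
  have hscale := mul_le_mul_of_nonneg_left
    (hpoly.mul_rpow_mul_laplaceExp_le hν hc (hφInv t⁻¹ (inv_pos.2 ht)).1 hwin hK) ht.le
  have hone := hφInv.mul_laplaceExp_inv_eq_one ht
  have : t * (c * K ^ β₁ * laplaceExp ν (φInv t⁻¹)) = c * K ^ β₁ := by
    linear_combination (c * K ^ β₁) * hone
  linarith

end PolyCond

lemma mul_sq_setIntegral_compl_Icc_le {m : Measure ℝ} {w : ℝ → ℝ} (hw : ∀ s, 0 ≤ w s)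
    (hwi : Integrable w m) {x : ℝ} (hvi : Integrable (fun s => (s - x) ^ 2 * w s) m) {ρ : ℝ}
    (hρ : 0 < ρ) :
    ρ ^ 2 * ∫ s in (Icc (x - ρ) (x + ρ))ᶜ, w s ∂m ≤ ∫ s, (s - x) ^ 2 * w s ∂m := by
  rw [← integral_const_mul]
  refine (setIntegral_mono_on (hwi.const_mul _).integrableOn hvi.integrableOn
    measurableSet_Icc.compl fun s hs => ?_).trans
      (setIntegral_le_integral hvi (.of_forall fun s => by have := hw s; positivity))
  have hρs : ρ ^ 2 ≤ (s - x) ^ 2 := by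
    rw [mem_compl_iff, mem_Icc, not_and_or, not_le, not_le] at hs
    rcases hs with hs | hs <;> nlinarith
  exact mul_le_mul_of_nonneg_right hρs (hw s)

namespace IsSubordinatorLaw

variable {ν : Measure ℝ} {μ : ℝ → Measure ℝ} (hμ : IsSubordinatorLaw ν μ)
include hμ

lemma ae_nonneg {t : ℝ} (ht : 0 < t) : ∀ᵐ s ∂(μ t), 0 ≤ s :=
  ae_iff.2 (measure_mono_null (fun _ hs => not_le.1 hs) (hμ.nonneg t ht))

lemma integrable_pow_mul_exp {t : ℝ} (ht : 0 < t) (k : ℕ) {l : ℝ} (hl : 0 < l) :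
    Integrable (fun s => s ^ k * exp (-(l * s))) (μ t) := by
  have := hμ.prob t ht
  refine Integrable.mono' (integrable_const (k.factorial / l ^ k : ℝ)) (by fun_prop) ?_
  filter_upwards [hμ.ae_nonneg ht] with s hs
  rw [Real.norm_of_nonneg (by positivity)]
  exact pow_mul_exp_neg_le hs hl k

lemma expMoment_zero {t l : ℝ} (ht : 0 < t) (hl : 0 ≤ l) :
    expMoment (μ t) 0 l = exp (-(t * laplaceExp ν l)) := by
  simpa [expMoment] using hμ.laplace t l ht hl

lemma hasDerivAt_expMoment {t : ℝ} (ht : 0 < t) (k : ℕ) {l : ℝ} (hl : 0 < l) :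
    HasDerivAt (expMoment (μ t) k) (-expMoment (μ t) (k + 1) l) l :=
  _root_.hasDerivAt_expMoment (hμ.ae_nonneg ht) (fun _ hx => hμ.integrable_pow_mul_exp ht k hx)
    (fun _ hx => hμ.integrable_pow_mul_exp ht (k + 1) hx) hl

lemma expMoment_one {t l : ℝ} (ht : 0 < t) (hl : 0 < l) :
    expMoment (μ t) 1 l = t * expMoment ν 1 l * exp (-(t * laplaceExp ν l)) := by
  have hE : expMoment (μ t) 0 =ᶠ[nhds l] fun x => exp (-(t * laplaceExp ν x)) :=
    Filter.eventually_of_mem (Ioi_mem_nhds hl) fun x hx => hμ.expMoment_zero ht (le_of_lt hx)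
  exact neg_injective <| (hμ.hasDerivAt_expMoment ht 0 hl).unique
    ((hμ.levy.hasDerivAt_exp_neg_mul_laplaceExp t hl).congr_of_eventuallyEq hE)

lemma expMoment_two {t l : ℝ} (ht : 0 < t) (hl : 0 < l) :
    expMoment (μ t) 2 l
      = (t * expMoment ν 2 l + (t * expMoment ν 1 l) ^ 2) * exp (-(t * laplaceExp ν l)) := by
  have hE : expMoment (μ t) 1 =ᶠ[nhds l]
      fun x => t * expMoment ν 1 x * exp (-(t * laplaceExp ν x)) :=
    Filter.eventually_of_mem (Ioi_mem_nhds hl) fun x hx => hμ.expMoment_one ht hx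
  have h := (hμ.hasDerivAt_expMoment ht 1 hl).unique
    ((((hμ.levy.hasDerivAt_expMoment one_ne_zero hl).const_mul t).mul
      (hμ.levy.hasDerivAt_exp_neg_mul_laplaceExp t hl)).congr_of_eventuallyEq hE)
  linear_combination -h

lemma integrable_sq_sub_mul_exp {t : ℝ} (ht : 0 < t) (x : ℝ) {l : ℝ} (hl : 0 < l) :
    Integrable (fun s => (s - x) ^ 2 * exp (-(l * s))) (μ t) := by
  have hint := fun k => hμ.integrable_pow_mul_exp ht k hl
  refine (((hint 2).sub ((hint 1).const_mul (2 * x))).add ((hint 0).const_mul (x ^ 2))).congr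
    (.of_forall fun s => ?_)
  simp only [Pi.add_apply, Pi.sub_apply]; ring

lemma integral_sq_sub_mul_exp {t l : ℝ} (ht : 0 < t) (hl : 0 < l) :
    ∫ s, (s - t * expMoment ν 1 l) ^ 2 * exp (-(l * s)) ∂(μ t)
      = t * expMoment ν 2 l * exp (-(t * laplaceExp ν l)) := by
  set x := t * expMoment ν 1 l
  have hint := fun k => hμ.integrable_pow_mul_exp ht k hl
  have hexpand : (fun s => (s - x) ^ 2 * exp (-(l * s))) = fun s => s ^ 2 * exp (-(l * s))
      - 2 * x * (s ^ 1 * exp (-(l * s))) + x ^ 2 * (s ^ 0 * exp (-(l * s))) := by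
    ext s; ring
  have hsub : Integrable (fun s => s ^ 2 * exp (-(l * s)) - 2 * x * (s ^ 1 * exp (-(l * s))))
      (μ t) := (hint 2).sub ((hint 1).const_mul _)
  rw [hexpand, integral_add hsub ((hint 0).const_mul _),
    integral_sub (hint 2) ((hint 1).const_mul _), integral_const_mul, integral_const_mul]
  change expMoment (μ t) 2 l - 2 * x * expMoment (μ t) 1 l + x ^ 2 * expMoment (μ t) 0 l = _
  rw [hμ.expMoment_two ht hl, hμ.expMoment_one ht hl, hμ.expMoment_zero ht hl.le]
  ring

lemma measureReal_Iio_inv_le {t l : ℝ} (ht : 0 < t) (hl : 0 < l) :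
    (μ t).real (Iio l⁻¹) ≤ exp (1 - t * laplaceExp ν l) := by
  have := hμ.prob t ht
  have hint : Integrable (fun s => exp (-l * s)) (μ t) := by
    simpa using hμ.integrable_pow_mul_exp ht 0 hl
  have h := ProbabilityTheory.measure_le_le_exp_mul_mgf (X := id) l⁻¹ (neg_nonpos.2 hl.le) hint
  have hmgf : ProbabilityTheory.mgf id (μ t) (-l) = exp (-(t * laplaceExp ν l)) := by
    simpa [ProbabilityTheory.mgf] using hμ.laplace t l ht hl.le
  rw [hmgf, neg_neg, mul_inv_cancel₀ hl.ne', ← exp_add, ← sub_eq_add_neg] at h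
  exact (measureReal_mono (s₂ := {s | id s ≤ l⁻¹}) fun s (hs : s < l⁻¹) => hs.le).trans h

/-- Chebyshev's inequality for the law of `S_t` tilted by `e^{-Λ s}`, whose mean is
`t φ'(Λ)` and whose variance `t (-φ''(Λ)) ≤ 2 t H(Λ) / Λ²`. -/
lemma setIntegral_compl_Icc_exp_le {t Λ : ℝ} (ht : 0 < t) (hΛ : 0 < Λ)
    (hH : t * Hfun ν Λ = 8) :
    ∫ s in (Icc (t * expMoment ν 1 Λ - 8 / Λ) (t * expMoment ν 1 Λ + 8 / Λ))ᶜ,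
      exp (-(Λ * s)) ∂(μ t) ≤ exp (-(t * laplaceExp ν Λ)) / 4 := by
  have hcheb := mul_sq_setIntegral_compl_Icc_le (fun s => (exp_pos (-(Λ * s))).le)
    (by simpa using hμ.integrable_pow_mul_exp ht 0 hΛ)
    (hμ.integrable_sq_sub_mul_exp ht (t * expMoment ν 1 Λ) hΛ)
    (div_pos (by norm_num : (0 : ℝ) < 8) hΛ)
  rw [hμ.integral_sq_sub_mul_exp ht hΛ] at hcheb
  have hV : Λ ^ 2 * (t * expMoment ν 2 Λ) ≤ 16 := by
    nlinarith [hμ.levy.sq_mul_expMoment_two_le hΛ]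
  have hΛ8 : Λ ^ 2 * (8 / Λ) ^ 2 = 64 := by field_simp; norm_num
  have h₁ := mul_le_mul_of_nonneg_left hcheb (sq_nonneg Λ)
  rw [← mul_assoc, hΛ8] at h₁
  have h₂ := mul_le_mul_of_nonneg_right hV (exp_pos (-(t * laplaceExp ν Λ))).le
  linarith

lemma three_quarters_exp_le_measureReal_Icc {t Λ : ℝ} (ht : 0 < t) (hΛ : 0 < Λ)
    (hH : t * Hfun ν Λ = 8) :
    3 / 4 * exp (-16) ≤
      (μ t).real (Icc (t * expMoment ν 1 Λ - 8 / Λ) (t * expMoment ν 1 Λ + 8 / Λ)) := by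
  have := hμ.prob t ht
  have hcompl := hμ.setIntegral_compl_Icc_exp_le ht hΛ hH
  set x := t * expMoment ν 1 Λ
  set E := exp (-(t * laplaceExp ν Λ))
  set I := Icc (x - 8 / Λ) (x + 8 / Λ)
  have hint : Integrable (fun s => exp (-(Λ * s))) (μ t) := by
    simpa using hμ.integrable_pow_mul_exp ht 0 hΛ
  have hsplit := integral_add_compl (measurableSet_Icc (a := x - 8 / Λ) (b := x + 8 / Λ)) hint
  rw [hμ.laplace t Λ ht hΛ.le] at hsplit
  have hI : ∫ s in I, exp (-(Λ * s)) ∂(μ t) ≤ exp (-(Λ * (x - 8 / Λ))) * (μ t).real I := by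
    calc ∫ s in I, exp (-(Λ * s)) ∂(μ t) ≤ ∫ _ in I, exp (-(Λ * (x - 8 / Λ))) ∂(μ t) :=
          setIntegral_mono_on hint.integrableOn (integrableOn_const (measure_ne_top _ _))
            measurableSet_Icc fun s hs => exp_le_exp.2 (by nlinarith [hs.1])
      _ = _ := by rw [setIntegral_const, smul_eq_mul, mul_comm]
  have hexp : exp (-(Λ * (x - 8 / Λ))) = exp 16 * E := by
    have hΛx : Λ * x = t * laplaceExp ν Λ - 8 := by
      rw [hμ.levy.Hfun_eq hΛ] at hH; linear_combination -hH
    rw [← exp_add]; congr 1; field_simp; linarith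
  have hmass : 3 / 4 ≤ exp 16 * (μ t).real I := by
    refine le_of_mul_le_mul_right ?_ (exp_pos _ : 0 < E)
    rw [hexp] at hI
    nlinarith
  calc 3 / 4 * exp (-16) ≤ exp 16 * (μ t).real I * exp (-16) := by gcongr
    _ = (μ t).real I := by rw [mul_comm, ← mul_assoc, ← exp_add]; simp

lemma half_exp_le_measureReal_Icc (htail : ∀ A, ∃ r, 0 < r ∧ A ≤ levyTail ν r)
    {t lam₀ K : ℝ} (ht : 0 < t) (hlam₀ : 0 < lam₀) (hφ : t * laplaceExp ν lam₀ = 1)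
    (hK : 0 < K) (hKφ : 19 ≤ t * laplaceExp ν (K * lam₀)) :
    1 / 2 * exp (-16) ≤ (μ t).real (Icc (K⁻¹ * lam₀⁻¹) lam₀⁻¹) := by
  have := hμ.prob t ht
  obtain ⟨Λ, hΛ, hH⟩ := hμ.levy.exists_le_and_mul_Hfun_eq htail ht hlam₀ hφ (a := 8) (by norm_num)
  have hmass := hμ.three_quarters_exp_le_measureReal_Icc ht (hlam₀.trans_le hΛ) hH
  have hright := hμ.levy.mul_expMoment_one_add_div_le ht.le hlam₀ hΛ hφ hH
  have hleft := hμ.measureReal_Iio_inv_le ht (mul_pos hK hlam₀)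
  rw [mul_inv] at hleft
  have hcover : Icc (t * expMoment ν 1 Λ - 8 / Λ) (t * expMoment ν 1 Λ + 8 / Λ)
      ⊆ Icc (K⁻¹ * lam₀⁻¹) lam₀⁻¹ ∪ Iio (K⁻¹ * lam₀⁻¹) := fun s hs =>
    (le_or_gt (K⁻¹ * lam₀⁻¹) s).imp (fun h => ⟨h, hs.2.trans hright⟩) id
  have hsplit := (measureReal_mono (μ := μ t) hcover).trans (measureReal_union_le _ _)
  have hexp : exp (1 - t * laplaceExp ν (K * lam₀)) ≤ 1 / 4 * exp (-16) := by
    have h₁ : exp (-1) ^ 2 ≤ (1 / 2) ^ 2 := by gcongr; exact exp_neg_one_lt_half.le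
    have h₂ : exp (1 - t * laplaceExp ν (K * lam₀)) ≤ exp (-1) ^ 2 * exp (-16) := by
      rw [← exp_nat_mul, ← exp_add]; exact exp_le_exp.2 (by push_cast; linarith)
    nlinarith [exp_pos (-16)]
  linarith

end IsSubordinatorLaw

theorem mode_estimate_general
    (ν : Measure ℝ) (μ : ℝ → Measure ℝ) (hsub : IsSubordinatorLaw ν μ)
    (φInv : ℝ → ℝ) (hφInv : IsPhiInv ν φInv)
    (R₁ : ℝ≥0∞) (c c' β₁ β₂ : ℝ)
    (hR₁ : 0 < R₁) (hc : 0 < c) (hβ₁ : 0 < β₁)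
    (hpoly : PolyCond ν R₁ c c' β₁ β₂) :
    (∃ δ : ℝ, δ ∈ Set.Ioo (0:ℝ) 1 ∧ ∀ T : ℝ, 0 < T → ∃ ε : ℝ, ε ∈ Set.Ioo (0:ℝ) 1 ∧
      ∀ t : ℝ, 0 < t → t < T →
        δ ≤ (μ t (Set.Icc (ε * (φInv (t⁻¹))⁻¹) ((φInv (t⁻¹))⁻¹))).toReal) ∧
    (R₁ = ⊤ → ∃ ε δ : ℝ, ε ∈ Set.Ioo (0:ℝ) 1 ∧ δ ∈ Set.Ioo (0:ℝ) 1 ∧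
      ∀ t : ℝ, 0 < t →
        δ ≤ (μ t (Set.Icc (ε * (φInv (t⁻¹))⁻¹) ((φInv (t⁻¹))⁻¹))).toReal) := by
  have hν := hsub.levy
  have hmode : ∀ t K, 0 < t → 0 < K → 19 ≤ t * laplaceExp ν (K * φInv t⁻¹) →
      1 / 2 * exp (-16) ≤ (μ t (Icc (K⁻¹ * (φInv t⁻¹)⁻¹) (φInv t⁻¹)⁻¹)).toReal :=
    fun t _ ht hK => hsub.half_exp_le_measureReal_Icc (hpoly.exists_le_levyTail hc hβ₁ hR₁) ht
      (hφInv t⁻¹ (inv_pos.2 ht)).1 (hφInv.mul_laplaceExp_inv_eq_one ht) hK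
  have hδ : 1 / 2 * exp (-16) ∈ Ioo (0 : ℝ) 1 :=
    ⟨by positivity, by linarith [exp_le_one_iff.2 (by norm_num : (-16 : ℝ) ≤ 0)]⟩
  have hε : ∀ K : ℝ, 1 < K → K⁻¹ ∈ Ioo (0 : ℝ) 1 :=
    fun K hK => ⟨inv_pos.2 (zero_lt_one.trans hK), inv_lt_one_of_one_lt₀ hK⟩
  have hwin := hpoly.eventually_le_mul_laplaceExp hν hc hβ₁ hφInv 19
  refine ⟨⟨_, hδ, fun T hT => ?_⟩, fun htop => ?_⟩
  · obtain ⟨K, ⟨hKwin, hKout⟩, hK⟩ := ((hwin.and (hφInv.eventually_le_mul_laplaceExp_of_le_ofReal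
      hν hR₁ (by norm_num : (0 : ℝ) ≤ 19) hT)).and (Filter.eventually_gt_atTop 1)).exists
    refine ⟨K⁻¹, hε K hK, fun t ht htT => hmode t K ht (zero_lt_one.trans hK) ?_⟩
    rcases lt_or_ge (ENNReal.ofReal (φInv t⁻¹)⁻¹) R₁ with h | h
    exacts [hKwin t ht h, hKout t ht htT h]
  · obtain ⟨K, hKwin, hK⟩ := (hwin.and (Filter.eventually_gt_atTop 1)).exists
    exact ⟨K⁻¹, _, hε K hK, hδ, fun t ht => hmode t K ht (zero_lt_one.trans hK)
      (hKwin t ht (htop ▸ ENNReal.ofReal_lt_top))⟩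

/-- Proposition 2.7: under (Poly-R₁), for any `T > 0` there are `δ ∈ (0,1)`
(independent of `T`) and `ε = ε(T) ∈ (0,1)` with
`P(ε/φ⁻¹(1/t) ≤ S_t ≤ 1/φ⁻¹(1/t)) ≥ δ` for `t ∈ (0,T)`; under (Poly-∞) there are
`ε, δ ∈ (0,1)` such that this bound holds for all `t > 0`. -/
theorem mode_estimate
    (ν : Measure ℝ) (μ : ℝ → Measure ℝ) (hsub : IsSubordinatorLaw ν μ)
    (φInv : ℝ → ℝ) (hφInv : IsPhiInv ν φInv)
    (R₁ : ℝ≥0∞) (c c' β₁ β₂ : ℝ)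
    (hR₁ : 0 < R₁) (hc : 0 < c) (hc' : 0 < c') (hβ₁ : 0 < β₁) (hβ : β₁ ≤ β₂)
    (hpoly : PolyCond ν R₁ c c' β₁ β₂) :
    (∃ δ : ℝ, δ ∈ Set.Ioo (0:ℝ) 1 ∧ ∀ T : ℝ, 0 < T → ∃ ε : ℝ, ε ∈ Set.Ioo (0:ℝ) 1 ∧
      ∀ t : ℝ, 0 < t → t < T →
        δ ≤ (μ t (Set.Icc (ε * (φInv (t⁻¹))⁻¹) ((φInv (t⁻¹))⁻¹))).toReal) ∧
    (R₁ = ⊤ → ∃ ε δ : ℝ, ε ∈ Set.Ioo (0:ℝ) 1 ∧ δ ∈ Set.Ioo (0:ℝ) 1 ∧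
      ∀ t : ℝ, 0 < t →
        δ ≤ (μ t (Set.Icc (ε * (φInv (t⁻¹))⁻¹) ((φInv (t⁻¹))⁻¹))).toReal) :=
  mode_estimate_general ν μ hsub φInv hφInv R₁ c c' β₁ β₂ hR₁ hc hβ₁ hpoly
end

section
/- Suppose (Poly-R₁) holds. Then for any κ>0 there exists a constant a₁=a₁(κ)>0 such that exp(−κ s H^{−1}(1/t)) ≤ a₁ t w(s) for all t>0 and all s with 1/φ^{−1}(1/t) ≤ s < R₁/2. -/
open MeasureTheory Real Set
open scoped ENNReal

/-! Put `λ = H⁻¹(1/t)` and `y = sλ`, so that `1/t = H(λ) = ∫ (1 - e^{-λu} - λu e^{-λu}) ν(du)`.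
Split the integral at `σ = s / (6 (1 + y)²)`. On `(0, σ]` the integrand is at most
`(λu)² ≤ λ²σu ≤ 2λ²σs (1 - e^{-u/s})`, which integrates to at most `φ(1/s)/3 ≤ 1/(3t)`
because `1/s ≤ φ⁻¹(1/t)`. On `(σ, ∞)` it is at most `1`, which integrates to
`w(σ) ≤ c' (6 (1 + y)²)^β₂ w(s)` by (Poly-R₁). Hence `t w(s) ≳ (1 + y)^{-2β₂}`, and
`(1 + y)^{2β₂} e^{-κy}` is bounded. -/

open Filter

lemma half_le_one_sub_exp_neg {x : ℝ} (hx₀ : 0 ≤ x) (hx₁ : x ≤ 1) : x / 2 ≤ 1 - exp (-x) := by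
  have h : exp (-x) * (1 + x) ≤ 1 := by
    calc exp (-x) * (1 + x) ≤ exp (-x) * exp x := by gcongr; linarith [add_one_le_exp x]
      _ = 1 := by rw [← exp_add, neg_add_cancel, exp_zero]
  nlinarith [exp_pos (-x), mul_nonneg hx₀ (sub_nonneg.2 hx₁)]

lemma one_sub_exp_neg_sub_mul_exp_neg_le_sq {x : ℝ} (hx : 0 ≤ x) :
    1 - exp (-x) - x * exp (-x) ≤ x ^ 2 := by
  nlinarith [one_sub_le_exp_neg x]

lemma one_sub_exp_neg_sub_mul_exp_neg_le_one {x : ℝ} (hx : 0 ≤ x) :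
    1 - exp (-x) - x * exp (-x) ≤ 1 := by
  nlinarith [exp_pos (-x)]

lemma exists_one_add_rpow_mul_exp_neg_le {κ : ℝ} (hκ : 0 < κ) (p : ℝ) :
    ∃ M > 0, ∀ x, 0 ≤ x → (1 + x) ^ p * exp (-(κ * x)) ≤ M := by
  set n := ⌈p⌉₊
  refine ⟨n.factorial * exp κ / κ ^ n, by positivity, fun x hx => ?_⟩
  have hpow : (1 + x) ^ p ≤ (1 + x) ^ n := by
    rw [← rpow_natCast]
    exact rpow_le_rpow_of_exponent_le (by linarith) (Nat.le_ceil p)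
  have hexp : (κ * (1 + x)) ^ n / n.factorial ≤ exp (κ * (1 + x)) :=
    pow_div_factorial_le_exp _ (by positivity) n
  rw [div_le_iff₀ (by positivity), mul_pow, mul_add, mul_one, exp_add] at hexp
  calc (1 + x) ^ p * exp (-(κ * x)) ≤ (1 + x) ^ n * exp (-(κ * x)) := by gcongr
    _ ≤ n.factorial * exp κ / κ ^ n := by
      rw [exp_neg, ← div_eq_mul_inv, div_le_div_iff₀ (exp_pos _) (by positivity)]
      linarith

namespace IsLevyMeasure

variable {ν : Measure ℝ}

lemma ae_pos_s7 (hν : IsLevyMeasure ν) : ∀ᵐ u ∂ν, 0 < u := by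
  rw [ae_iff]
  exact measure_mono_null (fun u (hu : ¬0 < u) => (not_lt.1 hu : u ≤ 0)) hν.supp

lemma restrict_Ioi_zero (hν : IsLevyMeasure ν) : ν.restrict (Ioi 0) = ν :=
  Measure.restrict_eq_self_of_ae_mem hν.ae_pos_s7

lemma integrable_min_one (hν : IsLevyMeasure ν) : Integrable (fun u => min u 1) ν := by
  have hIoc : IntegrableOn (fun u => min u 1) (Ioc 0 1) ν :=
    hν.integ.congr_fun (fun u hu => (min_eq_left hu.2).symm) measurableSet_Ioc
  have hIoi : IntegrableOn (fun u => min u 1) (Ioi 1) ν :=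
    (integrableOn_const (hν.tail_fin 1 one_pos).ne).congr_fun
      (fun u hu => (min_eq_right (le_of_lt hu)).symm) measurableSet_Ioi
  rw [← hν.restrict_Ioi_zero, ← Ioc_union_Ioi_eq_Ioi zero_le_one]
  exact hIoc.union hIoi

lemma integrable_of_norm_le_mul_min_one (hν : IsLevyMeasure ν) {f : ℝ → ℝ}
    (hf : AEStronglyMeasurable f ν) {C : ℝ} (hbound : ∀ u, 0 < u → ‖f u‖ ≤ C * min u 1) :
    Integrable f ν :=
  (hν.integrable_min_one.const_mul C).mono' hf
    (by filter_upwards [hν.ae_pos_s7] with u hu using hbound u hu)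

lemma integrable_one_sub_exp_neg_mul (hν : IsLevyMeasure ν) {l : ℝ} (hl : 0 ≤ l) :
    Integrable (fun u => 1 - exp (-(l * u))) ν := by
  refine hν.integrable_of_norm_le_mul_min_one (Continuous.aestronglyMeasurable (by fun_prop))
    (C := l + 1) fun u hu => ?_
  have hlu : 0 ≤ l * u := by positivity
  have h₀ : 0 ≤ 1 - exp (-(l * u)) := sub_nonneg.2 (exp_le_one_iff.2 (by linarith))
  have h₁ : 1 - exp (-(l * u)) ≤ l * u := by linarith [one_sub_le_exp_neg (l * u)]
  rw [norm_of_nonneg h₀]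
  rcases le_total u 1 with h | h
  · rw [min_eq_left h]; nlinarith
  · rw [min_eq_right h]; linarith [exp_pos (-(l * u))]

lemma integrable_mul_exp_neg_mul (hν : IsLevyMeasure ν) {l : ℝ} (hl : 0 < l) :
    Integrable (fun u => u * exp (-(l * u))) ν := by
  refine hν.integrable_of_norm_le_mul_min_one (Continuous.aestronglyMeasurable (by fun_prop))
    (C := 1 + l⁻¹) fun u hu => ?_
  rw [norm_of_nonneg (by positivity)]
  rcases le_total u 1 with h | h
  · have : exp (-(l * u)) ≤ 1 := exp_le_one_iff.2 (by nlinarith)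
    rw [min_eq_left h]
    nlinarith [inv_pos.2 hl]
  · have hle : u * exp (-(l * u)) ≤ l⁻¹ :=
      calc u * exp (-(l * u)) = l⁻¹ * (l * u * exp (-(l * u))) := by field_simp
        _ ≤ l⁻¹ * 1 := by
          gcongr
          exact (mul_exp_neg_le_exp_neg_one _).trans (exp_le_one_iff.2 (by norm_num))
        _ = l⁻¹ := mul_one _
    rw [min_eq_right h]
    linarith

lemma monotoneOn_laplaceExp (hν : IsLevyMeasure ν) : MonotoneOn (laplaceExp ν) (Ici 0) := by
  intro a ha b hb hab
  refine integral_mono_ae (hν.integrable_one_sub_exp_neg_mul ha)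
    (hν.integrable_one_sub_exp_neg_mul hb) ?_
  filter_upwards [hν.ae_pos_s7] with u hu
  gcongr

lemma hasDerivAt_laplaceExp_s7 (hν : IsLevyMeasure ν) {l : ℝ} (hl : 0 < l) :
    HasDerivAt (laplaceExp ν) (∫ u, u * exp (-(l * u)) ∂ν) l := by
  refine (hasDerivAt_integral_of_dominated_loc_of_deriv_le (F := fun x u => 1 - exp (-(x * u)))
    (F' := fun x u => u * exp (-(x * u))) (bound := fun u => u * exp (-(l / 2 * u)))
    (Ioi_mem_nhds (half_lt_self hl))
    (Eventually.of_forall fun _ => Continuous.aestronglyMeasurable (by fun_prop))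
    (hν.integrable_one_sub_exp_neg_mul hl.le) (Continuous.aestronglyMeasurable (by fun_prop))
    ?_ (hν.integrable_mul_exp_neg_mul (half_pos hl)) ?_).2
  · filter_upwards [hν.ae_pos_s7] with u hu x hx
    rw [norm_of_nonneg (by positivity)]
    gcongr
    exact le_of_lt hx
  · refine Eventually.of_forall fun u x _ => ?_
    have h : HasDerivAt (fun x => -(x * u)) (-u) x := (hasDerivAt_mul_const u).neg
    convert h.exp.const_sub 1 using 1
    ring

lemma Hfun_eq_integral_s7 (hν : IsLevyMeasure ν) {l : ℝ} (hl : 0 < l) :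
    Hfun ν l = ∫ u, (1 - exp (-(l * u)) - l * u * exp (-(l * u))) ∂ν := by
  rw [Hfun, (hν.hasDerivAt_laplaceExp_s7 hl).deriv, laplaceExp, ← integral_const_mul,
    ← integral_sub (hν.integrable_one_sub_exp_neg_mul hl.le)
      ((hν.integrable_mul_exp_neg_mul hl).const_mul l)]
  simp only [mul_assoc]

lemma Hfun_le (hν : IsLevyMeasure ν) {l σ s : ℝ} (hl : 0 < l) (hσ : 0 < σ) (hσs : σ ≤ s) :
    Hfun ν l ≤ 2 * l ^ 2 * σ * s * laplaceExp ν s⁻¹ + levyTail ν σ := by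
  set g : ℝ → ℝ := fun u => 1 - exp (-(l * u)) - l * u * exp (-(l * u))
  have hg : Integrable g ν :=
    (hν.integrable_one_sub_exp_neg_mul hl.le).sub <|
      ((hν.integrable_mul_exp_neg_mul hl).const_mul l).congr
        (.of_forall fun _ => (mul_assoc _ _ _).symm)
  have hs : 0 < s := hσ.trans_le hσs
  have hφ : Integrable (fun u => 1 - exp (-(s⁻¹ * u))) ν :=
    hν.integrable_one_sub_exp_neg_mul (inv_nonneg.2 hs.le)
  have hsmall : ∫ u in Ioc 0 σ, g u ∂ν ≤ 2 * l ^ 2 * σ * s * laplaceExp ν s⁻¹ := by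
    have hpt : ∀ u ∈ Ioc 0 σ, g u ≤ 2 * l ^ 2 * σ * s * (1 - exp (-(s⁻¹ * u))) := by
      rintro u ⟨hu₀, huσ⟩
      have hus : s⁻¹ * u ≤ 1 := by rw [inv_mul_le_iff₀ hs]; linarith
      calc g u ≤ (l * u) ^ 2 := one_sub_exp_neg_sub_mul_exp_neg_le_sq (by positivity)
        _ ≤ l ^ 2 * σ * u := by nlinarith [sq_nonneg l]
        _ = 2 * l ^ 2 * σ * s * (s⁻¹ * u / 2) := by field_simp
        _ ≤ 2 * l ^ 2 * σ * s * (1 - exp (-(s⁻¹ * u))) := by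
          gcongr
          exact half_le_one_sub_exp_neg (by positivity) hus
    calc ∫ u in Ioc 0 σ, g u ∂ν
        ≤ ∫ u in Ioc 0 σ, 2 * l ^ 2 * σ * s * (1 - exp (-(s⁻¹ * u))) ∂ν :=
          setIntegral_mono_on hg.integrableOn (hφ.const_mul _).integrableOn measurableSet_Ioc hpt
      _ = 2 * l ^ 2 * σ * s * ∫ u in Ioc 0 σ, (1 - exp (-(s⁻¹ * u))) ∂ν := integral_const_mul _ _
      _ ≤ 2 * l ^ 2 * σ * s * laplaceExp ν s⁻¹ := by
          gcongr
          refine setIntegral_le_integral hφ ?_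
          filter_upwards [hν.ae_pos_s7] with u hu
          exact sub_nonneg.2 (exp_le_one_iff.2 (by simp only [neg_nonpos]; positivity))
  have hlarge : ∫ u in Ioi σ, g u ∂ν ≤ levyTail ν σ :=
    calc ∫ u in Ioi σ, g u ∂ν ≤ ∫ _ in Ioi σ, (1 : ℝ) ∂ν :=
          setIntegral_mono_on hg.integrableOn (integrableOn_const (hν.tail_fin σ hσ).ne)
            measurableSet_Ioi fun u hu =>
              one_sub_exp_neg_sub_mul_exp_neg_le_one (mul_nonneg hl.le (hσ.trans hu).le)
      _ = levyTail ν σ := by simp [levyTail, Measure.real]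
  calc Hfun ν l = ∫ u, g u ∂ν := hν.Hfun_eq_integral_s7 hl
    _ = ∫ u in Ioc 0 σ, g u ∂ν + ∫ u in Ioi σ, g u ∂ν := by
      rw [← setIntegral_union Ioc_disjoint_Ioi_same measurableSet_Ioi hg.integrableOn
        hg.integrableOn, Ioc_union_Ioi_eq_Ioi hσ.le, hν.restrict_Ioi_zero]
    _ ≤ _ := add_le_add hsmall hlarge

end IsLevyMeasure

namespace PolyCond

variable {ν : Measure ℝ} {R₁ : ℝ≥0∞} {c c' β₁ β₂ : ℝ}

lemma levyTail_pos_s7 (hpoly : PolyCond ν R₁ c c' β₁ β₂) (hc : 0 < c) {s : ℝ} (hs : 0 < s)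
    (hsR : ENNReal.ofReal s < R₁) : 0 < levyTail ν s := by
  have h := (hpoly s s hs le_rfl hsR).1
  rw [div_self hs.ne', one_rpow, mul_one] at h
  refine (show 0 ≤ levyTail ν s from ENNReal.toReal_nonneg).lt_of_ne fun h₀ => ?_
  rw [← h₀, div_zero] at h
  exact hc.not_ge h

lemma levyTail_le (hpoly : PolyCond ν R₁ c c' β₁ β₂) (hc : 0 < c) {r R : ℝ} (hr : 0 < r)
    (hrR : r ≤ R) (hR : ENNReal.ofReal R < R₁) :
    levyTail ν r ≤ c' * (R / r) ^ β₂ * levyTail ν R :=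
  (div_le_iff₀ (hpoly.levyTail_pos_s7 hc (hr.trans_le hrR) hR)).1 (hpoly r R hr hrR hR).2

end PolyCond

lemma one_le_mul_levyTail {ν : Measure ℝ} (hν : IsLevyMeasure ν) {φInv HInv : ℝ → ℝ}
    (hφInv : IsPhiInv ν φInv) (hHInv : IsHInv ν HInv) {R₁ : ℝ≥0∞} {c c' β₁ β₂ : ℝ}
    (hc : 0 < c) (hpoly : PolyCond ν R₁ c c' β₁ β₂) {t s : ℝ} (ht : 0 < t)
    (hs : (φInv t⁻¹)⁻¹ ≤ s) (hsR : ENNReal.ofReal s < R₁) :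
    1 ≤ 3 / 2 * c' * (6 * (1 + s * HInv t⁻¹) ^ 2) ^ β₂ * (t * levyTail ν s) := by
  obtain ⟨hφ₀, hφ⟩ := hφInv t⁻¹ (inv_pos.2 ht)
  obtain ⟨hl₀, hH⟩ := hHInv t⁻¹ (inv_pos.2 ht)
  set l := HInv t⁻¹
  have hs₀ : 0 < s := (inv_pos.2 hφ₀).trans_le hs
  set m := 1 + s * l
  have hm : s * l ≤ m := by linarith
  set σ := s / (6 * m ^ 2)
  have hσ₀ : 0 < σ := by positivity
  have hσs : σ ≤ s := div_le_self hs₀.le (by nlinarith [mul_pos hs₀ hl₀])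
  have hφs : laplaceExp ν s⁻¹ ≤ t⁻¹ :=
    hφ ▸ hν.monotoneOn_laplaceExp (inv_nonneg.2 hs₀.le) hφ₀.le ((inv_le_comm₀ hφ₀ hs₀).1 hs)
  have hcoef : 2 * l ^ 2 * σ * s ≤ 1 / 3 := by
    rw [show 2 * l ^ 2 * σ * s = (s * l) ^ 2 / (3 * m ^ 2) by simp only [σ]; field_simp; ring,
      div_le_iff₀ (by positivity)]
    nlinarith [mul_pos hs₀ hl₀]
  have htail : levyTail ν σ ≤ c' * (6 * m ^ 2) ^ β₂ * levyTail ν s := by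
    simpa only [σ, div_div_cancel₀ hs₀.ne'] using hpoly.levyTail_le hc hσ₀ hσs hsR
  have hineq : t⁻¹ ≤ 1 / 3 * t⁻¹ + c' * (6 * m ^ 2) ^ β₂ * levyTail ν s :=
    calc t⁻¹ ≤ 2 * l ^ 2 * σ * s * laplaceExp ν s⁻¹ + levyTail ν σ :=
          hH ▸ hν.Hfun_le hl₀ hσ₀ hσs
      _ ≤ 1 / 3 * t⁻¹ + c' * (6 * m ^ 2) ^ β₂ * levyTail ν s := by
        refine add_le_add ((mul_le_mul_of_nonneg_left hφs (by positivity)).trans ?_) htail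
        exact mul_le_mul_of_nonneg_right hcoef (inv_pos.2 ht).le
  calc 1 = 3 / 2 * t * (2 / 3 * t⁻¹) := by field_simp
    _ ≤ 3 / 2 * t * (c' * (6 * m ^ 2) ^ β₂ * levyTail ν s) :=
      mul_le_mul_of_nonneg_left (by linarith) (by positivity)
    _ = _ := by ring

theorem exp_poly_tail_bound_general
    (ν : Measure ℝ) (hν : IsLevyMeasure ν)
    (φInv : ℝ → ℝ) (hφInv : IsPhiInv ν φInv)
    (HInv : ℝ → ℝ) (hHInv : IsHInv ν HInv)
    (R₁ : ℝ≥0∞) (c c' β₁ β₂ : ℝ)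
    (hc : 0 < c) (hc' : 0 < c')
    (hpoly : PolyCond ν R₁ c c' β₁ β₂) :
    ∀ κ : ℝ, 0 < κ → ∃ a₁ : ℝ, 0 < a₁ ∧
      ∀ t s : ℝ, 0 < t → (φInv (t⁻¹))⁻¹ ≤ s → ENNReal.ofReal s < R₁ / 2 →
        Real.exp (-(κ * (s * HInv (t⁻¹)))) ≤ a₁ * (t * levyTail ν s) := by
  intro κ hκ
  obtain ⟨M, hM, hbound⟩ := exists_one_add_rpow_mul_exp_neg_le hκ (2 * β₂)
  refine ⟨3 / 2 * c' * 6 ^ β₂ * M, by positivity, fun t s ht hs hsR => ?_⟩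
  have hs₀ : 0 < s := (inv_pos.2 (hφInv t⁻¹ (inv_pos.2 ht)).1).trans_le hs
  set y := s * HInv t⁻¹
  have hy : 0 ≤ y := mul_nonneg hs₀.le (hHInv t⁻¹ (inv_pos.2 ht)).1.le
  have hkey := one_le_mul_levyTail hν hφInv hHInv hc hpoly ht hs
    (hsR.trans_le ENNReal.half_le_self)
  have hrpow : (6 * (1 + y) ^ 2) ^ β₂ = 6 ^ β₂ * (1 + y) ^ (2 * β₂) := by
    rw [mul_rpow (by norm_num) (by positivity), rpow_mul (by positivity), rpow_two]
  have htw : 0 ≤ t * levyTail ν s := mul_nonneg ht.le ENNReal.toReal_nonneg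
  calc exp (-(κ * y))
      ≤ exp (-(κ * y)) * (3 / 2 * c' * (6 * (1 + y) ^ 2) ^ β₂ * (t * levyTail ν s)) :=
        le_mul_of_one_le_right (exp_pos _).le hkey
    _ = 3 / 2 * c' * 6 ^ β₂ * ((1 + y) ^ (2 * β₂) * exp (-(κ * y))) * (t * levyTail ν s) := by
        rw [hrpow]; ring
    _ ≤ 3 / 2 * c' * 6 ^ β₂ * M * (t * levyTail ν s) := by gcongr; exact hbound y hy

/-- Lemma 2.8: under (Poly-R₁), for any `κ > 0` there is `a₁ > 0` such that
`exp(-κ s H⁻¹(1/t)) ≤ a₁ t w(s)` for all `t > 0` and `1/φ⁻¹(1/t) ≤ s < R₁/2`. -/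
theorem exp_poly_tail_bound
    (ν : Measure ℝ) (hν : IsLevyMeasure ν)
    (φInv : ℝ → ℝ) (hφInv : IsPhiInv ν φInv)
    (HInv : ℝ → ℝ) (hHInv : IsHInv ν HInv)
    (R₁ : ℝ≥0∞) (c c' β₁ β₂ : ℝ)
    (hR₁ : 0 < R₁) (hc : 0 < c) (hc' : 0 < c') (hβ₁ : 0 < β₁) (hβ : β₁ ≤ β₂)
    (hpoly : PolyCond ν R₁ c c' β₁ β₂) :
    ∀ κ : ℝ, 0 < κ → ∃ a₁ : ℝ, 0 < a₁ ∧
      ∀ t s : ℝ, 0 < t → (φInv (t⁻¹))⁻¹ ≤ s → ENNReal.ofReal s < R₁ / 2 →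
        Real.exp (-(κ * (s * HInv (t⁻¹)))) ≤ a₁ * (t * levyTail ν s) :=
  exp_poly_tail_bound_general ν hν φInv hφInv HInv hHInv R₁ c c' β₁ β₂ hc hc' hpoly
end

section
/- Let Φ:[0,∞)→[0,∞) be strictly increasing with Φ(0)=0 and satisfy the global weak scaling condition: there exist α₂≥α₁>0 and c₁,c₂>0 with c₁(R/r)^{α₁} ≤ Φ(R)/Φ(r) ≤ c₂(R/r)^{α₂} for all 0<r≤R. Then there exists a strictly increasing differentiable function Φ̃:(0,∞)→(0,∞) such that: (P1) Φ(r) ≃ Φ̃(r) for all r>0 (i.e. the ratio is bounded above and below by positive constants) and Φ̃ satisfies the same weak scaling condition with indices α₁,α₂ (with possibly different constants); and (P2) Φ̃′(r) ≃ r^{−1}Φ̃(r) for all r>0 and (Φ̃^{−1})′(t) ≃ t^{−1}Φ̃^{−1}(t) for all t>0, where Φ̃^{−1} is the inverse of Φ̃. -/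
/-!
Averaging against `ds / s`, `f ↦ ∫₀ʳ f(s) ds / s`, preserves comparability with a weakly scaling
`f`: the lower index `α₁ > 0` bounds the average above by `f(r) / (c₁ α₁)`, and the doubling
property given by the upper index bounds it below through the contribution of `[r/2, r]`.
The average of a monotone function is continuous, and the average of a continuous function is
differentiable with derivative `f(r) / r`. Averaging `Φ` twice therefore gives `Φ̃ ≃ Φ` with
`Φ̃'(r) ≃ Φ̃(r) / r`, and then `(Φ̃⁻¹)'(t) = 1 / Φ̃'(Φ̃⁻¹ t) ≃ Φ̃⁻¹(t) / t`.
-/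

open MeasureTheory Real Set Filter

def ComparableOnIoi (f g : ℝ → ℝ) : Prop :=
  ∃ a b : ℝ, 0 < a ∧ 0 < b ∧ ∀ r : ℝ, 0 < r → a * g r ≤ f r ∧ f r ≤ b * g r

namespace ComparableOnIoi

variable {f f' g h : ℝ → ℝ}

theorem symm (hfg : ComparableOnIoi f g) : ComparableOnIoi g f := by
  obtain ⟨a, b, ha, hb, hfg⟩ := hfg
  refine ⟨b⁻¹, a⁻¹, inv_pos.2 hb, inv_pos.2 ha, fun r hr => ⟨?_, ?_⟩⟩
  · rw [inv_mul_le_iff₀ hb]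
    exact (hfg r hr).2
  · rw [le_inv_mul_iff₀ ha]
    exact (hfg r hr).1

theorem trans (hfg : ComparableOnIoi f g) (hgh : ComparableOnIoi g h) : ComparableOnIoi f h := by
  obtain ⟨a, b, ha, hb, hfg⟩ := hfg
  obtain ⟨a', b', ha', hb', hgh⟩ := hgh
  refine ⟨a * a', b * b', mul_pos ha ha', mul_pos hb hb', fun r hr => ⟨?_, ?_⟩⟩
  · calc a * a' * h r = a * (a' * h r) := mul_assoc _ _ _
      _ ≤ a * g r := by gcongr; exact (hgh r hr).1
      _ ≤ f r := (hfg r hr).1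
  · calc f r ≤ b * g r := (hfg r hr).2
      _ ≤ b * (b' * h r) := by gcongr; exact (hgh r hr).2
      _ = b * b' * h r := (mul_assoc _ _ _).symm

theorem div_id (hfg : ComparableOnIoi f g) :
    ComparableOnIoi (fun r => f r / r) (fun r => g r / r) := by
  obtain ⟨a, b, ha, hb, hfg⟩ := hfg
  refine ⟨a, b, ha, hb, fun r hr => ?_⟩
  simp only [← mul_div_assoc]
  exact ⟨by gcongr; exact (hfg r hr).1, by gcongr; exact (hfg r hr).2⟩

theorem congr_left (hfg : ComparableOnIoi f g) (h : ∀ r, 0 < r → f r = f' r) :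
    ComparableOnIoi f' g := by
  obtain ⟨a, b, ha, hb, hfg⟩ := hfg
  exact ⟨a, b, ha, hb, fun r hr => h r hr ▸ hfg r hr⟩

end ComparableOnIoi

def HasWeakScaling (f : ℝ → ℝ) (α₁ α₂ : ℝ) : Prop :=
  ∃ c₁ c₂ : ℝ, 0 < c₁ ∧ 0 < c₂ ∧ ∀ r R : ℝ, 0 < r → r ≤ R →
    c₁ * (R / r) ^ α₁ ≤ f R / f r ∧ f R / f r ≤ c₂ * (R / r) ^ α₂

namespace HasWeakScaling

variable {f g : ℝ → ℝ} {α₁ α₂ : ℝ}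

theorem exists_mul_le (hf : HasWeakScaling f α₁ α₂) (hpos : ∀ r, 0 < r → 0 < f r) :
    ∃ c₁ c₂ : ℝ, 0 < c₁ ∧ 0 < c₂ ∧ ∀ r R : ℝ, 0 < r → r ≤ R →
      c₁ * (R / r) ^ α₁ * f r ≤ f R ∧ f R ≤ c₂ * (R / r) ^ α₂ * f r := by
  obtain ⟨c₁, c₂, hc₁, hc₂, hf⟩ := hf
  refine ⟨c₁, c₂, hc₁, hc₂, fun r R hr hrR => ?_⟩
  rw [← le_div_iff₀ (hpos r hr), ← div_le_iff₀ (hpos r hr)]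
  exact hf r R hr hrR

theorem of_comparableOnIoi (hf : HasWeakScaling f α₁ α₂) (hpos : ∀ r, 0 < r → 0 < f r)
    (hgf : ComparableOnIoi g f) : HasWeakScaling g α₁ α₂ := by
  obtain ⟨c₁, c₂, hc₁, hc₂, hf⟩ := hf
  obtain ⟨a, b, ha, hb, hgf⟩ := hgf
  refine ⟨a / b * c₁, b / a * c₂, by positivity, by positivity, fun r R hr hrR => ?_⟩
  have hR := hr.trans_le hrR
  have hfr := hpos r hr
  have hfR := hpos R hR
  obtain ⟨hgr₁, hgr₂⟩ := hgf r hr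
  obtain ⟨hgR₁, hgR₂⟩ := hgf R hR
  have hgr : 0 < g r := (mul_pos ha hfr).trans_le hgr₁
  constructor
  · calc a / b * c₁ * (R / r) ^ α₁ ≤ a / b * (f R / f r) := by
          rw [mul_assoc]; gcongr; exact (hf r R hr hrR).1
      _ = (a * f R) / (b * f r) := by field_simp
      _ ≤ g R / g r := div_le_div₀ ((mul_pos ha hfR).le.trans hgR₁) hgR₁ hgr hgr₂
  · calc g R / g r ≤ (b * f R) / (a * f r) := div_le_div₀ (by positivity) hgR₂ (by positivity) hgr₁
      _ = b / a * (f R / f r) := by field_simp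
      _ ≤ b / a * c₂ * (R / r) ^ α₂ := by
          rw [mul_assoc]; gcongr; exact (hf r R hr hrR).2

theorem tendsto_atTop (hf : HasWeakScaling f α₁ α₂) (hpos : ∀ r, 0 < r → 0 < f r)
    (hα₁ : 0 < α₁) :
    Tendsto f atTop atTop := by
  obtain ⟨c₁, _, hc₁, _, hf'⟩ := hf.exists_mul_le hpos
  have hlim : Tendsto (fun r : ℝ => c₁ * f 1 * r ^ α₁) atTop atTop :=
    (tendsto_rpow_atTop hα₁).const_mul_atTop (mul_pos hc₁ (hpos 1 one_pos))
  refine tendsto_atTop_mono' atTop ?_ hlim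
  filter_upwards [eventually_ge_atTop 1] with r hr
  calc c₁ * f 1 * r ^ α₁ = c₁ * (r / 1) ^ α₁ * f 1 := by rw [div_one]; ring
    _ ≤ f r := (hf' 1 r one_pos hr).1

theorem div_id_le_rpow (hf : HasWeakScaling f α₁ α₂) (hpos : ∀ r, 0 < r → 0 < f r) :
    ∃ c, 0 < c ∧ ∀ s r, 0 < s → s ≤ r → f s / s ≤ f r / (c * r ^ α₁) * s ^ (α₁ - 1) := by
  obtain ⟨c, _, hc, _, hf'⟩ := hf.exists_mul_le hpos
  refine ⟨c, hc, fun s r hs hsr => ?_⟩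
  have hr := hs.trans_le hsr
  have key := (hf' s r hs hsr).1
  rw [div_rpow hr.le hs.le] at key
  rw [rpow_sub_one hs.ne', div_le_iff₀ hs]
  field_simp
  calc f s * c * r ^ α₁ = c * (r ^ α₁ / s ^ α₁) * f s * s ^ α₁ := by
        field_simp
    _ ≤ f r * s ^ α₁ := by gcongr

end HasWeakScaling

structure IsScaleFunction (f : ℝ → ℝ) (α₁ α₂ : ℝ) : Prop where
  pos : ∀ r, 0 < r → 0 < f r
  mono : MonotoneOn f (Ioi 0)
  scaling : HasWeakScaling f α₁ α₂

noncomputable def logPrimitive (f : ℝ → ℝ) (r : ℝ) : ℝ := ∫ s in (0 : ℝ)..r, f s / s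

theorem logPrimitive_zero (f : ℝ → ℝ) : logPrimitive f 0 = 0 :=
  intervalIntegral.integral_same

theorem logPrimitive_nonneg {f : ℝ → ℝ} (hf : ∀ s, 0 < s → 0 ≤ f s) {r : ℝ} (hr : 0 ≤ r) :
    0 ≤ logPrimitive f r :=
  intervalIntegral.integral_nonneg hr fun s hs =>
    hs.1.eq_or_lt.elim (fun h => by simp [← h]) fun h => div_nonneg (hf s h) h.le

namespace IsScaleFunction

variable {f : ℝ → ℝ} {α₁ α₂ : ℝ}

theorem aestronglyMeasurable_div_id (hf : IsScaleFunction f α₁ α₂) :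
    AEStronglyMeasurable (fun s => f s / s) (volume.restrict (Ioi 0)) :=
  ((aemeasurable_restrict_of_monotoneOn measurableSet_Ioi hf.mono).div
    measurable_id.aemeasurable).aestronglyMeasurable

theorem intervalIntegrable_div_id (hf : IsScaleFunction f α₁ α₂) (hα₁ : 0 < α₁) {a b : ℝ}
    (ha : 0 ≤ a) (hb : 0 ≤ b) : IntervalIntegrable (fun s => f s / s) volume a b := by
  suffices h : ∀ r, 0 < r → IntervalIntegrable (fun s => f s / s) volume 0 r by
    have h' : ∀ r, 0 ≤ r → IntervalIntegrable (fun s => f s / s) volume 0 r := fun r hr =>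
      hr.eq_or_lt.elim (fun h0 => h0 ▸ IntervalIntegrable.refl) (h r)
    exact (h' a ha).symm.trans (h' b hb)
  intro r hr
  obtain ⟨c, hc, hle⟩ := hf.scaling.div_id_le_rpow hf.pos
  rw [intervalIntegrable_iff_integrableOn_Ioc_of_le hr.le]
  have hbound : IntegrableOn (fun s => f r / (c * r ^ α₁) * s ^ (α₁ - 1)) (Ioc 0 r) :=
    ((intervalIntegral.intervalIntegrable_rpow' (by linarith)).const_mul _).1
  refine hbound.mono' (hf.aestronglyMeasurable_div_id.mono_measure
    (Measure.restrict_mono Ioc_subset_Ioi_self le_rfl)) ?_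
  filter_upwards [ae_restrict_mem measurableSet_Ioc] with s hs
  rw [norm_of_nonneg (div_nonneg (hf.pos s hs.1).le hs.1.le)]
  exact hle s r hs.1 hs.2

theorem logPrimitive_le (hf : IsScaleFunction f α₁ α₂) (hα₁ : 0 < α₁) :
    ∃ b, 0 < b ∧ ∀ r, 0 < r → logPrimitive f r ≤ b * f r := by
  obtain ⟨c, hc, hle⟩ := hf.scaling.div_id_le_rpow hf.pos
  refine ⟨(c * α₁)⁻¹, by positivity, fun r hr => ?_⟩
  have hbound : IntervalIntegrable (fun s => f r / (c * r ^ α₁) * s ^ (α₁ - 1)) volume 0 r :=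
    (intervalIntegral.intervalIntegrable_rpow' (by linarith)).const_mul _
  calc logPrimitive f r ≤ ∫ s in (0 : ℝ)..r, f r / (c * r ^ α₁) * s ^ (α₁ - 1) :=
        intervalIntegral.integral_mono_on_of_le_Ioo hr.le
          (hf.intervalIntegrable_div_id hα₁ le_rfl hr.le) hbound
          fun s hs => hle s r hs.1 hs.2.le
    _ = (c * α₁)⁻¹ * f r := by
        rw [intervalIntegral.integral_const_mul, integral_rpow (Or.inl (by linarith)),
          sub_add_cancel, zero_rpow hα₁.ne', sub_zero]
        have := hf.pos r hr
        field_simp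

theorem mul_div_le_integral (hf : IsScaleFunction f α₁ α₂) (hα₁ : 0 < α₁) {s t : ℝ}
    (hs : 0 < s) (hst : s ≤ t) : (t - s) * (f s / t) ≤ ∫ u in s..t, f u / u := by
  have hconst := intervalIntegral.integral_mono_on hst intervalIntegrable_const
    (hf.intervalIntegrable_div_id hα₁ hs.le (hs.le.trans hst)) fun u hu =>
      div_le_div₀ (hf.pos u (hs.trans_le hu.1)).le (hf.mono hs (hs.trans_le hu.1) hu.1)
        (hs.trans_le hu.1) hu.2
  rwa [intervalIntegral.integral_const, smul_eq_mul] at hconst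

theorem logPrimitive_add_integral (hf : IsScaleFunction f α₁ α₂) (hα₁ : 0 < α₁) {s t : ℝ}
    (hs : 0 ≤ s) (ht : 0 ≤ t) : logPrimitive f s + ∫ u in s..t, f u / u = logPrimitive f t :=
  intervalIntegral.integral_add_adjacent_intervals
    (hf.intervalIntegrable_div_id hα₁ le_rfl hs) (hf.intervalIntegrable_div_id hα₁ hs ht)

theorem le_logPrimitive (hf : IsScaleFunction f α₁ α₂) (hα₁ : 0 < α₁) :
    ∃ a, 0 < a ∧ ∀ r, 0 < r → a * f r ≤ logPrimitive f r := by
  obtain ⟨_, c, _, hc, hf'⟩ := hf.scaling.exists_mul_le hf.pos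
  refine ⟨(2 * (c * 2 ^ α₂))⁻¹, by positivity, fun r hr => ?_⟩
  have hhalf : 0 < r / 2 := half_pos hr
  have hdoubling : f r ≤ c * 2 ^ α₂ * f (r / 2) := by
    simpa [div_div_cancel₀ hr.ne'] using (hf' (r / 2) r hhalf (half_le_self hr.le)).2
  calc (2 * (c * 2 ^ α₂))⁻¹ * f r ≤ (r - r / 2) * (f (r / 2) / r) := by
        rw [inv_mul_le_iff₀ (by positivity)]
        field_simp
        linarith
    _ ≤ ∫ u in (r / 2)..r, f u / u := hf.mul_div_le_integral hα₁ hhalf (half_le_self hr.le)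
    _ ≤ logPrimitive f r := by
        rw [← hf.logPrimitive_add_integral hα₁ hhalf.le hr.le]
        linarith [logPrimitive_nonneg (fun s hs => (hf.pos s hs).le) hhalf.le]

theorem comparableOnIoi_logPrimitive (hf : IsScaleFunction f α₁ α₂) (hα₁ : 0 < α₁) :
    ComparableOnIoi (logPrimitive f) f := by
  obtain ⟨a, ha, hle⟩ := hf.le_logPrimitive hα₁
  obtain ⟨b, hb, hge⟩ := hf.logPrimitive_le hα₁
  exact ⟨a, b, ha, hb, fun r hr => ⟨hle r hr, hge r hr⟩⟩

theorem logPrimitive_pos (hf : IsScaleFunction f α₁ α₂) (hα₁ : 0 < α₁) {r : ℝ} (hr : 0 < r) :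
    0 < logPrimitive f r := by
  obtain ⟨a, ha, hle⟩ := hf.le_logPrimitive hα₁
  exact (mul_pos ha (hf.pos r hr)).trans_le (hle r hr)

theorem strictMonoOn_logPrimitive (hf : IsScaleFunction f α₁ α₂) (hα₁ : 0 < α₁) :
    StrictMonoOn (logPrimitive f) (Ici 0) := by
  intro s hs t ht hst
  rcases (mem_Ici.1 hs).eq_or_lt with rfl | hs
  · rw [logPrimitive_zero]
    exact hf.logPrimitive_pos hα₁ hst
  · rw [← hf.logPrimitive_add_integral hα₁ hs.le (hs.trans hst).le, lt_add_iff_pos_right]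
    refine lt_of_lt_of_le ?_ (hf.mul_div_le_integral hα₁ hs hst.le)
    exact mul_pos (sub_pos.2 hst) (div_pos (hf.pos s hs) (hs.trans hst))

theorem continuousOn_logPrimitive (hf : IsScaleFunction f α₁ α₂) (hα₁ : 0 < α₁) :
    ContinuousOn (logPrimitive f) (Ici 0) := by
  intro x hx
  have hT : 0 ≤ x + 1 := by linarith [mem_Ici.1 hx]
  have hcont := intervalIntegral.continuousOn_primitive_interval'
    (hf.intervalIntegrable_div_id hα₁ le_rfl hT) left_mem_uIcc
  rw [uIcc_of_le hT] at hcont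
  refine (hcont x ⟨hx, by linarith⟩).mono_of_mem_nhdsWithin ?_
  exact mem_nhdsWithin.2 ⟨Iio (x + 1), isOpen_Iio, lt_add_one x, fun y hy => ⟨hy.2, hy.1.le⟩⟩

theorem hasDerivAt_logPrimitive (hf : IsScaleFunction f α₁ α₂) (hα₁ : 0 < α₁) {r : ℝ}
    (hr : 0 < r) (hcont : ContinuousAt f r) : HasDerivAt (logPrimitive f) (f r / r) r :=
  intervalIntegral.integral_hasDerivAt_right (hf.intervalIntegrable_div_id hα₁ le_rfl hr.le)
    ⟨Ioi 0, Ioi_mem_nhds hr, hf.aestronglyMeasurable_div_id⟩ (hcont.div continuousAt_id hr.ne')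

theorem logPrimitive (hf : IsScaleFunction f α₁ α₂) (hα₁ : 0 < α₁) :
    IsScaleFunction (logPrimitive f) α₁ α₂ where
  pos _ hr := hf.logPrimitive_pos hα₁ hr
  mono := (hf.strictMonoOn_logPrimitive hα₁).monotoneOn.mono Ioi_subset_Ici_self
  scaling := hf.scaling.of_comparableOnIoi hf.pos (hf.comparableOnIoi_logPrimitive hα₁)

end IsScaleFunction

theorem exists_inverse_of_strictMonoOn_Ici {G : ℝ → ℝ} (hcont : ContinuousOn G (Ici 0))
    (h0 : G 0 = 0) (hmono : StrictMonoOn G (Ici 0)) (htop : Tendsto G atTop atTop) :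
    ∃ Ginv : ℝ → ℝ, Continuous Ginv ∧ (∀ r, 0 < r → Ginv (G r) = r) ∧
      ∀ t, 0 < t → 0 < Ginv t ∧ G (Ginv t) = t := by
  -- extended by the identity on `(-∞, 0]`, `G` becomes an order isomorphism of `ℝ`
  set Ψ : ℝ → ℝ := fun r => G (max r 0) + min r 0 with hΨ
  have hΨpos : ∀ r, 0 ≤ r → Ψ r = G r := fun r hr => by simp [hΨ, hr]
  have hΨneg : ∀ r, r ≤ 0 → Ψ r = r := fun r hr => by simp [hΨ, hr, h0]
  have hΨmono : StrictMono Ψ := by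
    intro s t hst
    rcases le_or_gt t 0 with ht | ht
    · rwa [hΨneg s (hst.le.trans ht), hΨneg t ht]
    rcases le_or_gt s 0 with hs | hs
    · rw [hΨneg s hs, hΨpos t ht.le]
      exact hs.trans_lt (h0 ▸ hmono (mem_Ici.2 le_rfl) ht.le ht)
    · rw [hΨpos s hs.le, hΨpos t ht.le]
      exact hmono hs.le ht.le hst
  have hΨcont : Continuous Ψ :=
    (hcont.comp_continuous (continuous_id.max continuous_const) fun r => le_max_right r 0).add
      (continuous_id.min continuous_const)
  have hΨtop : Tendsto Ψ atTop atTop :=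
    htop.congr' (by filter_upwards [eventually_ge_atTop 0] with r hr using (hΨpos r hr).symm)
  have hΨbot : Tendsto Ψ atBot atBot :=
    tendsto_id.congr' (by filter_upwards [eventually_le_atBot 0] with r hr using (hΨneg r hr).symm)
  set e := hΨmono.orderIsoOfSurjective Ψ (hΨcont.surjective hΨtop hΨbot)
  refine ⟨e.symm, e.symm.continuous, fun r hr => ?_, fun t ht => ?_⟩
  · rw [← hΨpos r hr.le]
    exact hΨmono.orderIsoOfSurjective_symm_apply_self _ _ r
  · have hΨt : Ψ (e.symm t) = t := hΨmono.orderIsoOfSurjective_self_symm_apply _ _ t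
    have hpos : 0 < e.symm t := by
      by_contra! hle
      rw [hΨneg _ hle] at hΨt
      linarith
    exact ⟨hpos, hΨpos _ hpos.le ▸ hΨt⟩

theorem comparableOnIoi_deriv_inverse {G Ginv : ℝ → ℝ} (hG : ∀ r, 0 < r → DifferentiableAt ℝ G r)
    (hG' : ComparableOnIoi (deriv G) (fun r => G r / r)) (hcont : Continuous Ginv)
    (hinv : ∀ t, 0 < t → 0 < Ginv t ∧ G (Ginv t) = t) :
    ComparableOnIoi (deriv Ginv) (fun t => Ginv t / t) := by
  obtain ⟨a, b, ha, hb, hG'⟩ := hG'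
  refine ⟨b⁻¹, a⁻¹, inv_pos.2 hb, inv_pos.2 ha, fun t ht => ?_⟩
  obtain ⟨hr, hGr⟩ := hinv t ht
  obtain ⟨hlow, hup⟩ := hG' _ hr
  dsimp only at hlow hup ⊢
  rw [hGr] at hlow hup
  have hderiv_pos : 0 < deriv G (Ginv t) := (mul_pos ha (div_pos ht hr)).trans_le hlow
  have hderiv : deriv Ginv t = (deriv G (Ginv t))⁻¹ :=
    (HasDerivAt.of_local_left_inverse hcont.continuousAt (hG _ hr).hasDerivAt hderiv_pos.ne'
      (by filter_upwards [Ioi_mem_nhds ht] with y hy using (hinv y hy).2)).deriv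
  rw [hderiv]
  constructor
  · calc b⁻¹ * (Ginv t / t) = (b * (t / Ginv t))⁻¹ := by rw [mul_inv, inv_div]
      _ ≤ (deriv G (Ginv t))⁻¹ := inv_anti₀ hderiv_pos hup
  · calc (deriv G (Ginv t))⁻¹ ≤ (a * (t / Ginv t))⁻¹ := inv_anti₀ (by positivity) hlow
      _ = a⁻¹ * (Ginv t / t) := by rw [mul_inv, inv_div]

theorem exists_smooth_scale_function_general
    (Φ : ℝ → ℝ) (α₁ α₂ c₁ c₂ : ℝ)
    (hα₁ : 0 < α₁) (hc₁ : 0 < c₁) (hc₂ : 0 < c₂)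
    (hΦ0 : Φ 0 = 0) (hΦmono : StrictMonoOn Φ (Set.Ici 0))
    (hscale : ∀ r R : ℝ, 0 < r → r ≤ R →
      c₁ * (R / r) ^ α₁ ≤ Φ R / Φ r ∧ Φ R / Φ r ≤ c₂ * (R / r) ^ α₂) :
    ∃ Φt ΦtInv : ℝ → ℝ,
      StrictMonoOn Φt (Set.Ioi 0) ∧
      (∀ r : ℝ, 0 < r → DifferentiableAt ℝ Φt r) ∧
      -- (P1): comparability with Φ
      (∃ a b : ℝ, 0 < a ∧ 0 < b ∧ ∀ r : ℝ, 0 < r →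
        a * Φt r ≤ Φ r ∧ Φ r ≤ b * Φt r) ∧
      -- (P1): weak scaling with the same indices
      (∃ c₁' c₂' : ℝ, 0 < c₁' ∧ 0 < c₂' ∧ ∀ r R : ℝ, 0 < r → r ≤ R →
        c₁' * (R / r) ^ α₁ ≤ Φt R / Φt r ∧ Φt R / Φt r ≤ c₂' * (R / r) ^ α₂) ∧
      -- ΦtInv is the inverse of Φt on (0,∞)
      (∀ r : ℝ, 0 < r → ΦtInv (Φt r) = r) ∧
      (∀ t : ℝ, 0 < t → 0 < ΦtInv t ∧ Φt (ΦtInv t) = t) ∧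
      -- (P2): derivative comparability for Φt
      (∃ a b : ℝ, 0 < a ∧ 0 < b ∧ ∀ r : ℝ, 0 < r →
        a * (Φt r / r) ≤ deriv Φt r ∧ deriv Φt r ≤ b * (Φt r / r)) ∧
      -- (P2): derivative comparability for the inverse
      (∃ a b : ℝ, 0 < a ∧ 0 < b ∧ ∀ t : ℝ, 0 < t →
        a * (ΦtInv t / t) ≤ deriv ΦtInv t ∧ deriv ΦtInv t ≤ b * (ΦtInv t / t)) := by
  have hΦ : IsScaleFunction Φ α₁ α₂ :=
    ⟨fun _ hr => hΦ0 ▸ hΦmono (mem_Ici.2 le_rfl) hr.le hr,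
      hΦmono.monotoneOn.mono Ioi_subset_Ici_self, c₁, c₂, hc₁, hc₂, hscale⟩
  set F := logPrimitive Φ
  set G := logPrimitive F
  have hF := hΦ.logPrimitive hα₁
  have hG := hF.logPrimitive hα₁
  have hGderiv : ∀ r, 0 < r → HasDerivAt G (F r / r) r := fun r hr =>
    hF.hasDerivAt_logPrimitive hα₁ hr
      ((hΦ.continuousOn_logPrimitive hα₁).continuousAt (Ici_mem_nhds hr))
  have hG' : ComparableOnIoi (deriv G) (fun r => G r / r) :=
    (hF.comparableOnIoi_logPrimitive hα₁).symm.div_id.congr_left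
      fun r hr => (hGderiv r hr).deriv.symm
  obtain ⟨Ginv, hGinv_cont, hleft, hright⟩ := exists_inverse_of_strictMonoOn_Ici
    (hF.continuousOn_logPrimitive hα₁) (logPrimitive_zero F)
    (hF.strictMonoOn_logPrimitive hα₁) (hG.scaling.tendsto_atTop hG.pos hα₁)
  have hGdiff : ∀ r, 0 < r → DifferentiableAt ℝ G r := fun r hr => (hGderiv r hr).differentiableAt
  exact ⟨G, Ginv, (hF.strictMonoOn_logPrimitive hα₁).mono Ioi_subset_Ici_self, hGdiff,
    ((hF.comparableOnIoi_logPrimitive hα₁).trans (hΦ.comparableOnIoi_logPrimitive hα₁)).symm,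
    hG.scaling, hleft, hright, hG',
    comparableOnIoi_deriv_inverse hGdiff hG' hGinv_cont hright⟩

/-- Lemma 3.1: for a strictly increasing `Φ : [0,∞) → [0,∞)` with `Φ(0) = 0` satisfying
a global weak scaling condition with indices `α₁ ≤ α₂`, there is a strictly increasing
differentiable function `Φ̃` (with inverse `Φ̃⁻¹`) comparable to `Φ`, satisfying the same
weak scaling condition, and with `Φ̃'(r) ≍ Φ̃(r)/r` and `(Φ̃⁻¹)'(t) ≍ Φ̃⁻¹(t)/t`. -/
theorem exists_smooth_scale_function
    (Φ : ℝ → ℝ) (α₁ α₂ c₁ c₂ : ℝ)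
    (hα₁ : 0 < α₁) (hα : α₁ ≤ α₂) (hc₁ : 0 < c₁) (hc₂ : 0 < c₂)
    (hΦ0 : Φ 0 = 0) (hΦmono : StrictMonoOn Φ (Set.Ici 0))
    (hscale : ∀ r R : ℝ, 0 < r → r ≤ R →
      c₁ * (R / r) ^ α₁ ≤ Φ R / Φ r ∧ Φ R / Φ r ≤ c₂ * (R / r) ^ α₂) :
    ∃ Φt ΦtInv : ℝ → ℝ,
      StrictMonoOn Φt (Set.Ioi 0) ∧
      (∀ r : ℝ, 0 < r → DifferentiableAt ℝ Φt r) ∧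
      -- (P1): comparability with Φ
      (∃ a b : ℝ, 0 < a ∧ 0 < b ∧ ∀ r : ℝ, 0 < r →
        a * Φt r ≤ Φ r ∧ Φ r ≤ b * Φt r) ∧
      -- (P1): weak scaling with the same indices
      (∃ c₁' c₂' : ℝ, 0 < c₁' ∧ 0 < c₂' ∧ ∀ r R : ℝ, 0 < r → r ≤ R →
        c₁' * (R / r) ^ α₁ ≤ Φt R / Φt r ∧ Φt R / Φt r ≤ c₂' * (R / r) ^ α₂) ∧
      -- ΦtInv is the inverse of Φt on (0,∞)
      (∀ r : ℝ, 0 < r → ΦtInv (Φt r) = r) ∧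
      (∀ t : ℝ, 0 < t → 0 < ΦtInv t ∧ Φt (ΦtInv t) = t) ∧
      -- (P2): derivative comparability for Φt
      (∃ a b : ℝ, 0 < a ∧ 0 < b ∧ ∀ r : ℝ, 0 < r →
        a * (Φt r / r) ≤ deriv Φt r ∧ deriv Φt r ≤ b * (Φt r / r)) ∧
      -- (P2): derivative comparability for the inverse
      (∃ a b : ℝ, 0 < a ∧ 0 < b ∧ ∀ t : ℝ, 0 < t →
        a * (ΦtInv t / t) ≤ deriv ΦtInv t ∧ deriv ΦtInv t ≤ b * (ΦtInv t / t)) :=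
  exists_smooth_scale_function_general Φ α₁ α₂ c₁ c₂ hα₁ hc₁ hc₂ hΦ0 hΦmono hscale
end

section
/- Let Φ:[0,∞)→[0,∞) be strictly increasing with Φ(0)=0 and satisfy the global weak scaling condition with indices 0<α₁≤α₂ (i.e. c(R/r)^{α₁} ≤ Φ(R)/Φ(r) ≤ c′(R/r)^{α₂} for all 0<r≤R). Let f:(0,∞)→(0,∞) and assume there exist constants c₁,p>0 such that s^p f(s) ≤ c₁ t^p f(t) for all 0<s≤t. Then there exists a constant C=C(c₁,p) (also depending on the scaling constants of Φ) such that for all r,κ>0, ∫_0^r f(s) exp(−κ²/Φ^{−1}(s)²) ds ≤ C r^{p+1} f(r) / Φ(κ)^p, where Φ^{−1} is the inverse of Φ. -/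
open MeasureTheory Real Set
open scoped Nat

/-!
On `(0, r]` the integrand is bounded by a constant times `r^p f(r) / Φ(κ)^p`. With `u = Φ⁻¹(s)`,
the hypothesis on `f` gives `f(s) ≤ c₁ r^p f(r) / s^p`, so it suffices that
`exp(-κ²/u²) ≤ A (Φ(u)/Φ(κ))^p` for a constant `A ≥ 1`. For `u ≥ κ` this is immediate; for
`u < κ` the upper scaling bound turns the right side into a negative power of `κ/u ≥ 1`, which the Gaussian factor
beats since `xⁿ ≤ n! eˣ`.
-/

lemma rpow_mul_exp_neg_sq_le_factorial {y q : ℝ} {n : ℕ} (hy : 1 ≤ y) (hq : q ≤ 2 * n) :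
    y ^ q * exp (-y ^ 2) ≤ n ! := by
  have hpow : y ^ q ≤ (y ^ 2) ^ n :=
    calc y ^ q ≤ y ^ ((2 * n : ℕ) : ℝ) := rpow_le_rpow_of_exponent_le hy (by exact_mod_cast hq)
      _ = (y ^ 2) ^ n := by rw [rpow_natCast, pow_mul]
  have hexp : (y ^ 2) ^ n ≤ n ! * exp (y ^ 2) := by
    have := pow_div_factorial_le_exp (y ^ 2) (by positivity) n
    rwa [div_le_iff₀ (by positivity), mul_comm] at this
  calc y ^ q * exp (-y ^ 2) ≤ n ! * exp (y ^ 2) * exp (-y ^ 2) :=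
        mul_le_mul_of_nonneg_right (hpow.trans hexp) (exp_pos _).le
    _ = n ! := by rw [mul_assoc, ← exp_add, add_neg_cancel, exp_zero, mul_one]

lemma exp_neg_sq_div_sq_le_of_scaling {Φ : ℝ → ℝ} {α c p u κ : ℝ} (hp : 0 ≤ p) (hc : 0 ≤ c)
    (hΦpos : ∀ x, 0 < x → 0 < Φ x) (hΦmono : MonotoneOn Φ (Ioi 0))
    (hscale : ∀ r R, 0 < r → r ≤ R → Φ R / Φ r ≤ c * (R / r) ^ α)
    (hu : 0 < u) (hκ : 0 < κ) :
    exp (-(κ ^ 2 / u ^ 2)) ≤ max 1 (⌈p * α / 2⌉₊ ! * c ^ p) * (Φ u / Φ κ) ^ p := by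
  have hΦu := hΦpos u hu
  have hΦκ := hΦpos κ hκ
  set X := (Φ u / Φ κ) ^ p
  have hX : 0 < X := rpow_pos_of_pos (div_pos hΦu hΦκ) p
  rcases le_or_gt κ u with hκu | huκ
  · have hX1 : 1 ≤ X := one_le_rpow ((one_le_div hΦκ).2 (hΦmono hκ hu hκu)) hp
    calc exp (-(κ ^ 2 / u ^ 2)) ≤ 1 := exp_le_one_iff.2 (neg_nonpos.2 (by positivity))
      _ ≤ max 1 (⌈p * α / 2⌉₊ ! * c ^ p) * X := one_le_mul_of_one_le_of_one_le (le_max_left _ _) hX1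
  · set y := κ / u
    have hy : 1 ≤ y := (one_le_div hu).2 huκ.le
    have hdecay : y ^ (p * α) * exp (-y ^ 2) ≤ ⌈p * α / 2⌉₊ ! :=
      rpow_mul_exp_neg_sq_le_factorial hy (by linarith [Nat.le_ceil (p * α / 2)])
    have hXinv : X⁻¹ ≤ c ^ p * y ^ (p * α) :=
      calc X⁻¹ = (Φ κ / Φ u) ^ p := by rw [← inv_rpow (div_pos hΦu hΦκ).le, inv_div]
        _ ≤ (c * y ^ α) ^ p :=
          rpow_le_rpow (div_pos hΦκ hΦu).le (hscale u κ hu huκ.le) hp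
        _ = c ^ p * y ^ (p * α) := by
          rw [mul_rpow hc (rpow_nonneg (by linarith) _), ← rpow_mul (by linarith), mul_comm α]
    calc exp (-(κ ^ 2 / u ^ 2)) = X * X⁻¹ * exp (-y ^ 2) := by
          rw [mul_inv_cancel₀ hX.ne', one_mul, div_pow]
      _ ≤ X * (c ^ p * y ^ (p * α)) * exp (-y ^ 2) := by gcongr
      _ = X * c ^ p * (y ^ (p * α) * exp (-y ^ 2)) := by ring
      _ ≤ X * c ^ p * ⌈p * α / 2⌉₊ ! := by gcongr
      _ = (⌈p * α / 2⌉₊ ! * c ^ p) * X := by ring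
      _ ≤ max 1 (⌈p * α / 2⌉₊ ! * c ^ p) * X := by gcongr; exact le_max_right _ _

lemma setIntegral_Ioc_le_const_mul {g : ℝ → ℝ} {a b C : ℝ} (hab : a ≤ b)
    (hg_nonneg : ∀ x ∈ Ioc a b, 0 ≤ g x) (hg_le : ∀ x ∈ Ioc a b, g x ≤ C) :
    ∫ x in Ioc a b, g x ≤ C * (b - a) := by
  have hnorm : ∀ x ∈ Ioc a b, ‖g x‖ ≤ C := fun x hx => by
    rw [norm_of_nonneg (hg_nonneg x hx)]; exact hg_le x hx
  calc ∫ x in Ioc a b, g x ≤ ‖∫ x in Ioc a b, g x‖ := le_abs_self _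
    _ ≤ C * volume.real (Ioc a b) := norm_setIntegral_le_of_norm_le_const measure_Ioc_lt_top hnorm
    _ = C * (b - a) := by rw [volume_real_Ioc_of_le hab]

theorem leftint_Phi_bound_general
    (Φ ΦInv : ℝ → ℝ) (α₁ α₂ cs cs' : ℝ)
    (hcs' : 0 < cs')
    (hΦ0 : Φ 0 = 0) (hΦmono : StrictMonoOn Φ (Set.Ici 0))
    (hscale : ∀ r R : ℝ, 0 < r → r ≤ R →
      cs * (R / r) ^ α₁ ≤ Φ R / Φ r ∧ Φ R / Φ r ≤ cs' * (R / r) ^ α₂)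
    (hΦInv : ∀ s : ℝ, 0 < s → 0 < ΦInv s ∧ Φ (ΦInv s) = s)
    (f : ℝ → ℝ) (hf_pos : ∀ s : ℝ, 0 < s → 0 < f s)
    (c₁ p : ℝ) (hc₁ : 0 < c₁) (hp : 0 < p)
    (hf : ∀ s t : ℝ, 0 < s → s ≤ t → s ^ p * f s ≤ c₁ * (t ^ p * f t)) :
    ∃ C : ℝ, 0 < C ∧ ∀ r κ : ℝ, 0 < r → 0 < κ →
      (∫ s in Set.Ioc (0:ℝ) r, f s * Real.exp (-(κ ^ 2 / (ΦInv s) ^ 2))) ≤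
        C * (r ^ (p + 1) * f r / Φ κ ^ p) := by
  set A := max 1 (⌈p * α₂ / 2⌉₊ ! * cs' ^ p)
  have hA : 0 < A := one_pos.trans_le (le_max_left _ _)
  refine ⟨A * c₁, mul_pos hA hc₁, fun r κ hr hκ => ?_⟩
  have hΦpos : ∀ x, 0 < x → 0 < Φ x := fun x hx =>
    hΦ0 ▸ hΦmono self_mem_Ici hx.le hx
  have hΦκ := hΦpos κ hκ
  have hpointwise : ∀ s ∈ Ioc 0 r,
      f s * exp (-(κ ^ 2 / ΦInv s ^ 2)) ≤ A * c₁ * (r ^ p * f r) / Φ κ ^ p := by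
    rintro s ⟨hs, hsr⟩
    obtain ⟨hu, hΦu⟩ := hΦInv s hs
    have hexp := exp_neg_sq_div_sq_le_of_scaling hp.le hcs'.le hΦpos
      (hΦmono.monotoneOn.mono Ioi_subset_Ici_self) (fun r R hr hrR => (hscale r R hr hrR).2) hu hκ
    rw [hΦu, div_rpow hs.le hΦκ.le] at hexp
    calc f s * exp (-(κ ^ 2 / ΦInv s ^ 2)) ≤ f s * (A * (s ^ p / Φ κ ^ p)) :=
          mul_le_mul_of_nonneg_left hexp (hf_pos s hs).le
      _ = A * (s ^ p * f s) / Φ κ ^ p := by ring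
      _ ≤ A * (c₁ * (r ^ p * f r)) / Φ κ ^ p := by gcongr A * ?_ / _; exact hf s r hs hsr
      _ = A * c₁ * (r ^ p * f r) / Φ κ ^ p := by ring
  calc ∫ s in Ioc 0 r, f s * exp (-(κ ^ 2 / ΦInv s ^ 2))
      ≤ A * c₁ * (r ^ p * f r) / Φ κ ^ p * (r - 0) :=
        setIntegral_Ioc_le_const_mul hr.le
          (fun s hs => mul_nonneg (hf_pos s hs.1).le (exp_pos _).le) hpointwise
    _ = A * c₁ * (r ^ (p + 1) * f r / Φ κ ^ p) := by rw [rpow_add hr, rpow_one]; ring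

/-- Lemma 3.2: if `Φ` is strictly increasing with `Φ(0)=0` and globally weakly scaling
with indices `α₁ ≤ α₂`, and `f : (0,∞) → (0,∞)` satisfies `s^p f(s) ≤ c₁ t^p f(t)` for
`0 < s ≤ t`, then `∫_0^r f(s) exp(-κ²/Φ⁻¹(s)²) ds ≤ C r^{p+1} f(r)/Φ(κ)^p`
for all `r, κ > 0`. -/
theorem leftint_Phi_bound
    (Φ ΦInv : ℝ → ℝ) (α₁ α₂ cs cs' : ℝ)
    (hα₁ : 0 < α₁) (hα : α₁ ≤ α₂) (hcs : 0 < cs) (hcs' : 0 < cs')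
    (hΦ0 : Φ 0 = 0) (hΦmono : StrictMonoOn Φ (Set.Ici 0))
    (hscale : ∀ r R : ℝ, 0 < r → r ≤ R →
      cs * (R / r) ^ α₁ ≤ Φ R / Φ r ∧ Φ R / Φ r ≤ cs' * (R / r) ^ α₂)
    (hΦInv : ∀ s : ℝ, 0 < s → 0 < ΦInv s ∧ Φ (ΦInv s) = s)
    (f : ℝ → ℝ) (hf_meas : Measurable f) (hf_pos : ∀ s : ℝ, 0 < s → 0 < f s)
    (c₁ p : ℝ) (hc₁ : 0 < c₁) (hp : 0 < p)
    (hf : ∀ s t : ℝ, 0 < s → s ≤ t → s ^ p * f s ≤ c₁ * (t ^ p * f t)) :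
    ∃ C : ℝ, 0 < C ∧ ∀ r κ : ℝ, 0 < r → 0 < κ →
      (∫ s in Set.Ioc (0:ℝ) r, f s * Real.exp (-(κ ^ 2 / (ΦInv s) ^ 2))) ≤
        C * (r ^ (p + 1) * f r / Φ κ ^ p) :=
  leftint_Phi_bound_general Φ ΦInv α₁ α₂ cs cs' hcs' hΦ0 hΦmono hscale hΦInv f hf_pos c₁ p hc₁ hp hf
end
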